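/- arXiv:2204.08517 — 11 statements merged into one kernel-verified Lean document; each statement's English description precedes it below -/
import Mathlib

section
/- A function f : T → ℂ is holomorphic on T if and only if there exist holomorphic functions f₁ and f₂ on 𝔻 with f₁(0) = f₂(0) such that f(z,0) = f₁(z) and f(0,z) = f₂(z) for all z ∈ 𝔻. -/
/-!
A holomorphic function on `T` restricts to holomorphic functions on the two discs, since a
local holomorphic extension restricts to each axis. Conversely, given `f₁` and `f₂` agreeing at
the origin, `(z, w) ↦ f₁ z + f₂ w - f₁ 0` is holomorphic on the bidisc and equals `f` on `T`.
-/

open Metric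

noncomputable section

/-- The open unit disc in `ℂ`. -/
def uD : Set ℂ := Metric.ball (0 : ℂ) 1

/-- The union of the two crossed discs `(𝔻 × {0}) ∪ ({0} × 𝔻)` in `ℂ²`. -/
def TT : Set (ℂ × ℂ) := {p | (p.1 ∈ uD ∧ p.2 = 0) ∨ (p.1 = 0 ∧ p.2 ∈ uD)}

/-- A function is holomorphic on `T` if near every point of `T` it extends to a
holomorphic function on an open neighbourhood. (Only the values on `T` are relevant.) -/
def HoloOnT (f : ℂ × ℂ → ℂ) : Prop :=
  ∀ p ∈ TT, ∃ U : Set (ℂ × ℂ), IsOpen U ∧ p ∈ U ∧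
    ∃ F : ℂ × ℂ → ℂ, DifferentiableOn ℂ F U ∧ ∀ q ∈ U ∩ TT, F q = f q

open Filter Topology

theorem DifferentiableAt.comp_of_eqOn_extension {𝕜 E G H : Type*} [NontriviallyNormedField 𝕜]
    [NormedAddCommGroup E] [NormedSpace 𝕜 E] [NormedAddCommGroup G] [NormedSpace 𝕜 G]
    [NormedAddCommGroup H] [NormedSpace 𝕜 H] {φ : E → G} {f F : G → H} {U S : Set G} {z : E}
    (hφ : DifferentiableAt 𝕜 φ z) (hU : IsOpen U) (hzU : φ z ∈ U) (hF : DifferentiableOn 𝕜 F U)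
    (hφS : ∀ᶠ w in 𝓝 z, φ w ∈ S) (hFf : ∀ q ∈ U ∩ S, F q = f q) :
    DifferentiableAt 𝕜 (f ∘ φ) z := by
  have hFφ : DifferentiableAt 𝕜 (F ∘ φ) z := (hF.differentiableAt (hU.mem_nhds hzU)).comp z hφ
  refine hFφ.congr_of_eventuallyEq ?_
  filter_upwards [hφ.continuousAt.preimage_mem_nhds (hU.mem_nhds hzU), hφS] with w hwU hwS
  exact (hFf (φ w) ⟨hwU, hwS⟩).symm

theorem HoloOnT.differentiableOn_comp {f : ℂ × ℂ → ℂ} (hf : HoloOnT f) {φ : ℂ → ℂ × ℂ}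
    (hφ : Differentiable ℂ φ) (hφT : ∀ z ∈ uD, φ z ∈ TT) : DifferentiableOn ℂ (f ∘ φ) uD := by
  intro z hz
  obtain ⟨U, hU, hzU, F, hF, hFf⟩ := hf (φ z) (hφT z hz)
  have hφT_near : ∀ᶠ w in 𝓝 z, φ w ∈ TT :=
    eventually_of_mem (isOpen_ball.mem_nhds hz) hφT
  exact ((hφ z).comp_of_eqOn_extension hU hzU hF hφT_near hFf).differentiableWithinAt

theorem zero_mem_uD : (0 : ℂ) ∈ uD := mem_ball_self one_pos

theorem TT_subset_uD_prod_uD : TT ⊆ uD ×ˢ uD := by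
  rintro p (⟨hp₁, hp₂⟩ | ⟨hp₁, hp₂⟩)
  · exact ⟨hp₁, hp₂ ▸ zero_mem_uD⟩
  · exact ⟨hp₁ ▸ zero_mem_uD, hp₂⟩

theorem holoOnT_of_eqOn {f F : ℂ × ℂ → ℂ} {U : Set (ℂ × ℂ)} (hU : IsOpen U) (hTU : TT ⊆ U)
    (hF : DifferentiableOn ℂ F U) (hFf : Set.EqOn F f TT) : HoloOnT f :=
  fun _ hp => ⟨U, hU, hTU hp, F, hF, fun _ hq => hFf hq.2⟩

theorem stmt_0 (f : ℂ × ℂ → ℂ) :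
    HoloOnT f ↔
      ∃ f₁ f₂ : ℂ → ℂ, DifferentiableOn ℂ f₁ uD ∧ DifferentiableOn ℂ f₂ uD ∧
        f₁ 0 = f₂ 0 ∧ (∀ z ∈ uD, f (z, 0) = f₁ z) ∧ (∀ z ∈ uD, f (0, z) = f₂ z) := by
  constructor
  · intro hf
    refine ⟨fun z => f (z, 0), fun z => f (0, z), ?_, ?_, rfl, fun z _ => rfl, fun z _ => rfl⟩
    · exact hf.differentiableOn_comp (differentiable_id.prodMk (differentiable_const 0))
        fun z hz => Or.inl ⟨hz, rfl⟩
    · exact hf.differentiableOn_comp ((differentiable_const 0).prodMk differentiable_id)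
        fun z hz => Or.inr ⟨rfl, hz⟩
  · rintro ⟨f₁, f₂, hf₁, hf₂, hf₁₂, hf₁f, hf₂f⟩
    refine holoOnT_of_eqOn (F := fun q => f₁ q.1 + f₂ q.2 - f₁ 0) (isOpen_ball.prod isOpen_ball)
      TT_subset_uD_prod_uD ?_ ?_
    · exact ((hf₁.comp differentiableOn_fst fun q hq => hq.1).add
        (hf₂.comp differentiableOn_snd fun q hq => hq.2)).sub (differentiableOn_const _)
    · rintro ⟨z, w⟩ (⟨hz, rfl⟩ | ⟨rfl, hw⟩)
      · simp only [hf₁f z hz, hf₁₂, add_sub_cancel_right]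
      · simp only [hf₂f w hw, add_sub_cancel_left]
end
end

section
/- Let G ⊆ ℂ² be open with T ⊆ G, let v = (v₁,v₂) ∈ ℂ² with |v₁|² + |v₂|² = 1, and let r > 0 be such that {ζv : ζ ∈ ℂ, |ζ| < r} ⊆ G. If (G,T) is norm preserving, then r ≤ 1/(|v₁| + |v₂|). -/
open Metric

noncomputable section

/-- Boundedness on `T`. -/
def BddOnT (f : ℂ × ℂ → ℂ) : Prop := ∃ C : ℝ, ∀ p ∈ TT, ‖f p‖ ≤ C

/-- The supremum of `‖f‖` over a subset of `ℂ²`. -/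
def supOn (f : ℂ × ℂ → ℂ) (S : Set (ℂ × ℂ)) : ℝ := sSup ((fun p => ‖f p‖) '' S)

/-- The pair `(G, T)` is norm preserving: every bounded holomorphic function on `T`
has a holomorphic extension to `G` with the same supremum norm. -/
def NormPres (G : Set (ℂ × ℂ)) : Prop :=
  ∀ f : ℂ × ℂ → ℂ, HoloOnT f → BddOnT f →
    ∃ F : ℂ × ℂ → ℂ, DifferentiableOn ℂ F G ∧ (∀ p ∈ TT, F p = f p) ∧
      supOn F G = supOn f TT

/-!
Choose unimodular `α, β` with `α v₁ = |v₁|` and `β v₂ = |v₂|`. The linear form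
`f(z, w) = α z + β w` has supremum `1` on `T`, so its norm preserving extension `F` maps `G`
into the closed unit disc. Since `F` agrees with `f` on both discs of `T`, its derivative at the
origin is `f`, so the slice `ζ ↦ F(ζ v)` on the disc of radius `r` has derivative
`f v = |v₁| + |v₂|` at `0`, and the Schwarz lemma bounds this by `1 / r`.
-/

open Filter Topology

theorem HasFDerivAt.apply_eq_of_eventually_smul_eq {𝕜 E E' : Type*} [NontriviallyNormedField 𝕜]
    [NormedAddCommGroup E] [NormedSpace 𝕜 E] [NormedAddCommGroup E'] [NormedSpace 𝕜 E']
    {F : E → E'} {D : E →L[𝕜] E'} (hF : HasFDerivAt F D 0) {u : E} {c : E'}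
    (h : ∀ᶠ z in 𝓝 (0 : 𝕜), F (z • u) = z • c) : D u = c := by
  have hline : HasDerivAt (fun z : 𝕜 => z • u) u 0 := by
    simpa using (hasDerivAt_id (0 : 𝕜)).smul_const u
  have hc : HasDerivAt (fun z : 𝕜 => z • c) c 0 := by
    simpa using (hasDerivAt_id (0 : 𝕜)).smul_const c
  exact (hF.comp_hasDerivAt_of_eq 0 hline (zero_smul 𝕜 u).symm).unique
    (hc.congr_of_eventuallyEq h)

lemma zero_mem_TT : (0 : ℂ × ℂ) ∈ TT :=
  Or.inl ⟨mem_ball_self one_pos, rfl⟩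

lemma holoOnT_of_differentiable {f : ℂ × ℂ → ℂ} (hf : Differentiable ℂ f) : HoloOnT f :=
  fun _ _ => ⟨Set.univ, isOpen_univ, Set.mem_univ _, f, hf.differentiableOn, fun _ _ => rfl⟩

lemma norm_le_of_supOn_eq {F : ℂ × ℂ → ℂ} {S : Set (ℂ × ℂ)} {c : ℝ} (hc : c ≠ 0)
    (h : supOn F S = c) : ∀ p ∈ S, ‖F p‖ ≤ c := by
  have hbdd : BddAbove ((fun p => ‖F p‖) '' S) := by
    by_contra hnot
    exact hc (h.symm.trans (Real.sSup_of_not_bddAbove hnot))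
  exact fun p hp => h ▸ le_csSup hbdd ⟨p, hp, rfl⟩

section LinearForm

variable {α β : ℂ}

lemma norm_linear_lt_one_of_mem_TT (hα : ‖α‖ = 1) (hβ : ‖β‖ = 1) {p : ℂ × ℂ} (hp : p ∈ TT) :
    ‖α * p.1 + β * p.2‖ < 1 := by
  rcases hp with ⟨h1, h2⟩ | ⟨h1, h2⟩
  · simpa [h2, hα, uD] using h1
  · simpa [h1, hβ, uD] using h2

lemma supOn_linear_TT (hα : ‖α‖ = 1) (hβ : ‖β‖ = 1) :
    supOn (fun p => α * p.1 + β * p.2) TT = 1 := by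
  refine csSup_eq_of_forall_le_of_forall_lt_exists_gt ⟨_, 0, zero_mem_TT, rfl⟩ ?_ ?_
  · rintro _ ⟨p, hp, rfl⟩
    exact (norm_linear_lt_one_of_mem_TT hα hβ hp).le
  · intro w hw
    set t : ℝ := (1 + max w 0) / 2
    have ht0 : 0 ≤ t := by positivity
    have ht1 : t < 1 := by simp only [t]; linarith [max_lt hw one_pos]
    have htT : ((t : ℂ), (0 : ℂ)) ∈ TT :=
      Or.inl ⟨by simpa [uD, abs_of_nonneg ht0] using ht1, rfl⟩
    refine ⟨t, ⟨_, htT, by simp [hα, abs_of_nonneg ht0]⟩, ?_⟩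
    simp only [t]
    linarith [le_max_left w 0]

lemma fderiv_zero_eq_of_eqOn_TT {F : ℂ × ℂ → ℂ} (hF : DifferentiableAt ℂ F 0)
    (hFT : ∀ p ∈ TT, F p = α * p.1 + β * p.2) :
    fderiv ℂ F 0 = α • ContinuousLinearMap.fst ℂ ℂ ℂ + β • ContinuousLinearMap.snd ℂ ℂ ℂ := by
  have hball : ball (0 : ℂ) 1 ∈ 𝓝 (0 : ℂ) := ball_mem_nhds 0 one_pos
  refine ContinuousLinearMap.prod_ext (ContinuousLinearMap.ext_ring ?_)
    (ContinuousLinearMap.ext_ring ?_)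
  · refine (hF.hasFDerivAt.apply_eq_of_eventually_smul_eq (u := ((1 : ℂ), (0 : ℂ)))
      (c := α) ?_).trans (by simp)
    filter_upwards [hball] with z hz
    rw [hFT _ (Or.inl ⟨by simpa [uD] using hz, by simp⟩)]
    simp [mul_comm]
  · refine (hF.hasFDerivAt.apply_eq_of_eventually_smul_eq (u := ((0 : ℂ), (1 : ℂ)))
      (c := β) ?_).trans (by simp)
    filter_upwards [hball] with z hz
    rw [hFT _ (Or.inr ⟨by simp, by simpa [uD] using hz⟩)]
    simp [mul_comm]

end LinearForm

theorem norm_fderiv_apply_le_of_norm_le_one {E E' : Type*} [NormedAddCommGroup E]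
    [NormedSpace ℂ E] [NormedAddCommGroup E'] [NormedSpace ℂ E'] {F : E → E'} {G : Set E}
    (hG : IsOpen G) (hF : DifferentiableOn ℂ F G) (hF1 : ∀ p ∈ G, ‖F p‖ ≤ 1) (hF0 : F 0 = 0)
    {v : E} {r : ℝ} (hr : 0 < r) (hdisc : ∀ ζ : ℂ, ‖ζ‖ < r → ζ • v ∈ G) :
    ‖fderiv ℂ F 0 v‖ ≤ 1 / r := by
  have hmaps : Set.MapsTo (fun ζ : ℂ => ζ • v) (ball 0 r) G :=
    fun ζ hζ => hdisc ζ (mem_ball_zero_iff.mp hζ)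
  have hslice : DifferentiableOn ℂ (fun ζ : ℂ => F (ζ • v)) (ball 0 r) :=
    hF.comp (differentiable_id.smul_const v).differentiableOn hmaps
  have hderiv : HasDerivAt (fun ζ : ℂ => F (ζ • v)) (fderiv ℂ F 0 v) 0 := by
    have h0G : (0 : E) ∈ G := by simpa using hmaps (mem_ball_self hr)
    exact (hF.differentiableAt (hG.mem_nhds h0G)).hasFDerivAt.comp_hasDerivAt_of_eq 0
      (by simpa using (hasDerivAt_id (0 : ℂ)).smul_const v) (zero_smul ℂ v).symm
  have hschwarz := Complex.norm_deriv_le_div_of_mapsTo_ball hslice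
    (fun ζ hζ => by simpa [hF0] using hF1 _ (hmaps hζ)) hr
  rwa [hderiv.deriv] at hschwarz

theorem stmt_2_general (G : Set (ℂ × ℂ)) (hG : IsOpen G)
    (v : ℂ × ℂ) (hv : ‖v.1‖ ^ 2 + ‖v.2‖ ^ 2 = 1) (r : ℝ) (hr : 0 < r)
    (hdisc : ∀ ζ : ℂ, ‖ζ‖ < r → ζ • v ∈ G)
    (hnp : NormPres G) :
    r ≤ 1 / (‖v.1‖ + ‖v.2‖) := by
  obtain ⟨α, hα, hαv⟩ := Complex.exists_norm_eq_mul_self v.1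
  obtain ⟨β, hβ, hβv⟩ := Complex.exists_norm_eq_mul_self v.2
  obtain ⟨F, hFG, hFT, hFsup⟩ := hnp (fun p => α * p.1 + β * p.2)
    (holoOnT_of_differentiable (by fun_prop))
    ⟨1, fun p hp => (norm_linear_lt_one_of_mem_TT hα hβ hp).le⟩
  rw [supOn_linear_TT hα hβ] at hFsup
  have h0G : (0 : ℂ × ℂ) ∈ G := by simpa using hdisc 0 (by simpa using hr)
  have hDv : fderiv ℂ F 0 v = ‖v.1‖ + ‖v.2‖ := by
    rw [fderiv_zero_eq_of_eqOn_TT (hFG.differentiableAt (hG.mem_nhds h0G)) hFT, hαv, hβv]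
    simp
  have hschwarz := norm_fderiv_apply_le_of_norm_le_one hG hFG
    (norm_le_of_supOn_eq one_ne_zero hFsup) (by simpa using hFT 0 zero_mem_TT) hr hdisc
  have hs : 0 < ‖v.1‖ + ‖v.2‖ := by nlinarith [norm_nonneg v.1, norm_nonneg v.2]
  rw [hDv, ← Complex.ofReal_add, Complex.norm_real, Real.norm_of_nonneg hs.le] at hschwarz
  exact (le_one_div hr hs).mpr hschwarz

theorem stmt_2 (G : Set (ℂ × ℂ)) (hG : IsOpen G) (hTG : TT ⊆ G)
    (v : ℂ × ℂ) (hv : ‖v.1‖ ^ 2 + ‖v.2‖ ^ 2 = 1) (r : ℝ) (hr : 0 < r)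
    (hdisc : ∀ ζ : ℂ, ‖ζ‖ < r → ζ • v ∈ G)
    (hnp : NormPres G) :
    r ≤ 1 / (‖v.1‖ + ‖v.2‖) :=
  stmt_2_general G hG v hv r hr hdisc hnp
end
end

section
/- There is no ℂ-linear map E from the vector space of bounded holomorphic functions on T to the vector space of bounded holomorphic functions on Δ such that for every bounded holomorphic f on T one has (Ef)(λ) = f(λ) for all λ ∈ T and sup_{λ∈Δ} |Ef(λ)| = sup_{λ∈T} |f(λ)|. -/
open Metric

noncomputable section

/-- The domain `Δ = {λ ∈ ℂ² : |λ₁| + |λ₂| < 1}`. -/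
def Delta : Set (ℂ × ℂ) := {p | ‖p.1‖ + ‖p.2‖ < 1}

/-!
For `|α| < 1` let `m_α s = (s - α) / (1 - α s)` be the disc automorphism and, for `‖c‖ = 1`,
`f_{α,c} λ = m_α (λ₁ + c λ₂)`. Its sup-norm on `T` is at most `1`, and it is the only holomorphic
function on `Δ` of norm `≤ 1` extending it: after composing with `m_{-α}` one has to show that
`G λ = λ₁ + c λ₂` is forced. On the discs `t ↦ t (a, b c̄)`, `a, b ≥ 0`, `a + b = 1`, the
derivative of `G` at `0` has modulus one, so the equality case of the Schwarz lemma pins `G` down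
on a real cone, and the identity theorem in `λ₂` does the rest. A norm-preserving `E` would
therefore fix each `f_{±1/2,±1}` on `Δ`, but
`f_{1/2,1} - f_{1/2,-1} - f_{-1/2,1} + f_{-1/2,-1}` vanishes on `T` and equals `1/5` at
`(1/4, 1/4)`, contradicting linearity together with norm preservation.
-/

open Set Filter Topology ComplexConjugate

def mobius (α : ℝ) (s : ℂ) : ℂ := (s - α) / (1 - α * s)

section Mobius

variable {α : ℝ} {s : ℂ}

lemma one_sub_mul_ne_zero_of_abs_lt (hα : |α| < 1) (hs : ‖s‖ ≤ 1) : (1 : ℂ) - α * s ≠ 0 := by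
  have hlt : ‖(α : ℂ) * s‖ < 1 := by
    rw [norm_mul, Complex.norm_real, Real.norm_eq_abs]
    nlinarith [norm_nonneg s, abs_nonneg α]
  intro h
  rw [← sub_eq_zero.1 h, norm_one] at hlt
  exact lt_irrefl _ hlt

/-- Squared, this is `(1 - α²) (1 - ‖s‖²) ≥ 0`. -/
lemma norm_sub_le_norm_one_sub_mul (hα : |α| ≤ 1) (hs : ‖s‖ ≤ 1) :
    ‖s - α‖ ≤ ‖1 - α * s‖ := by
  have hα2 : α ^ 2 ≤ 1 := by nlinarith [sq_abs α, abs_nonneg α]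
  have hs2 : s.re ^ 2 + s.im ^ 2 ≤ 1 := by
    have := Complex.sq_norm s
    rw [Complex.normSq_apply] at this
    nlinarith [norm_nonneg s]
  refine (pow_le_pow_iff_left₀ (norm_nonneg _) (norm_nonneg _) two_ne_zero).1 ?_
  simp only [Complex.sq_norm, Complex.normSq_apply, Complex.sub_re, Complex.sub_im,
    Complex.mul_re, Complex.mul_im, Complex.ofReal_re, Complex.ofReal_im, Complex.one_re,
    Complex.one_im]
  nlinarith

lemma norm_mobius_le_one (hα : |α| < 1) (hs : ‖s‖ ≤ 1) : ‖mobius α s‖ ≤ 1 := by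
  rw [mobius, norm_div, div_le_one (norm_pos_iff.2 (one_sub_mul_ne_zero_of_abs_lt hα hs))]
  exact norm_sub_le_norm_one_sub_mul hα.le hs

lemma mobius_neg_mobius (hα : |α| < 1) (hs : ‖s‖ ≤ 1) : mobius (-α) (mobius α s) = s := by
  have hden := one_sub_mul_ne_zero_of_abs_lt hα hs
  have hα2 : (1 : ℂ) - (α : ℂ) ^ 2 ≠ 0 := by
    rw [← Complex.ofReal_pow, ← Complex.ofReal_one, ← Complex.ofReal_sub]
    exact Complex.ofReal_ne_zero.2 (by nlinarith [sq_abs α, abs_nonneg α])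
  have hnum : (s - α) / (1 - α * s) - ((-α : ℝ) : ℂ) = s * (1 - (α : ℂ) ^ 2) / (1 - α * s) := by
    rw [div_sub' hden]
    push_cast
    ring
  have hden' : (1 : ℂ) - ((-α : ℝ) : ℂ) * ((s - α) / (1 - α * s)) =
      (1 - (α : ℂ) ^ 2) / (1 - α * s) := by
    push_cast
    field_simp
    ring
  rw [mobius, mobius, hnum, hden', div_div_div_cancel_right₀ hden, mul_div_cancel_right₀ _ hα2]

lemma mobius_neg_neg : mobius (-α) (-s) = -mobius α s := by
  unfold mobius
  push_cast
  ring

lemma DifferentiableOn.mobius {E : Type*} [NormedAddCommGroup E] [NormedSpace ℂ E]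
    {F : E → ℂ} {S : Set E} (hF : DifferentiableOn ℂ F S) (h : ∀ x ∈ S, 1 - α * F x ≠ 0) :
    DifferentiableOn ℂ (fun x => _root_.mobius α (F x)) S := by
  simpa only [_root_.mobius, div_eq_mul_inv] using
    (hF.sub_const (α : ℂ)).fun_mul (((hF.const_mul (α : ℂ)).const_sub 1).fun_inv h)

end Mobius

lemma isOpen_Delta : IsOpen Delta :=
  isOpen_lt (continuous_fst.norm.add continuous_snd.norm) continuous_const

lemma mk_zero_mem_TT {z : ℂ} (hz : ‖z‖ < 1) : ((z, 0) : ℂ × ℂ) ∈ TT :=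
  Or.inl ⟨mem_ball_zero_iff.2 hz, rfl⟩

lemma zero_mk_mem_TT {w : ℂ} (hw : ‖w‖ < 1) : ((0, w) : ℂ × ℂ) ∈ TT :=
  Or.inr ⟨rfl, mem_ball_zero_iff.2 hw⟩

lemma TT_subset_Delta : TT ⊆ Delta := by
  rintro ⟨z, w⟩ (⟨hz, rfl⟩ | ⟨rfl, hw⟩)
  · simpa [Delta] using mem_ball_zero_iff.1 hz
  · simpa [Delta] using mem_ball_zero_iff.1 hw

lemma norm_add_mul_lt_one_of_mem_Delta {c : ℂ} (hc : ‖c‖ ≤ 1) {p : ℂ × ℂ} (hp : p ∈ Delta) :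
    ‖p.1 + c * p.2‖ < 1 :=
  calc ‖p.1 + c * p.2‖ ≤ ‖p.1‖ + ‖c‖ * ‖p.2‖ := (norm_add_le _ _).trans_eq (by rw [norm_mul])
    _ ≤ ‖p.1‖ + ‖p.2‖ := by gcongr; exact mul_le_of_le_one_left (norm_nonneg _) hc
    _ < 1 := hp

lemma holoOnT_of_differentiableOn {f : ℂ × ℂ → ℂ} (hf : DifferentiableOn ℂ f Delta) :
    HoloOnT f :=
  fun _ hp => ⟨Delta, isOpen_Delta, TT_subset_Delta hp, f, hf, fun _ _ => rfl⟩

section supOn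

variable {F : ℂ × ℂ → ℂ} {S : Set (ℂ × ℂ)}

lemma norm_le_supOn (hF : BddAbove ((fun p => ‖F p‖) '' S)) {p : ℂ × ℂ} (hp : p ∈ S) :
    ‖F p‖ ≤ supOn F S :=
  le_csSup hF (mem_image_of_mem _ hp)

lemma supOn_le {M : ℝ} (hM : 0 ≤ M) (hF : ∀ p ∈ S, ‖F p‖ ≤ M) : supOn F S ≤ M :=
  Real.sSup_le (forall_mem_image.2 hF) hM

/-- `sSup` of a set that is not bounded above is `0`, so a positive `supOn` is a genuine bound. -/
lemma bddAbove_of_supOn_pos (h : 0 < supOn F S) : BddAbove ((fun p => ‖F p‖) '' S) := by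
  by_contra hF
  rw [supOn, Real.sSup_of_not_bddAbove hF] at h
  exact lt_irrefl _ h

end supOn

/-- Equality case of the Schwarz lemma along the complex line through `v`. -/
lemma apply_smul_eq_of_norm_fderiv_eq_one {E : Type*} [NormedAddCommGroup E] [NormedSpace ℂ E]
    {G : E → ℂ} {S : Set E} {L : E →L[ℂ] ℂ} {v : E} (hG : DifferentiableOn ℂ G S)
    (hG1 : ∀ x ∈ S, ‖G x‖ ≤ 1) (hG0 : G 0 = 0) (hL : HasFDerivAt G L 0)
    (hv : ∀ t ∈ ball (0 : ℂ) 1, t • v ∈ S) (hLv : ‖L v‖ = 1) :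
    ∀ t ∈ ball (0 : ℂ) 1, G (t • v) = t * L v := by
  set g : ℂ → ℂ := fun t => G (t • v)
  have hgd : DifferentiableOn ℂ g (ball 0 1) :=
    hG.comp (differentiable_id.smul_const v).differentiableOn hv
  have hg0 : g 0 = 0 := by simp [g, hG0]
  have hg' : HasDerivAt g (L v) 0 := by
    have hline : HasDerivAt (fun t : ℂ => t • v) v 0 := by
      simpa using (hasDerivAt_id (0 : ℂ)).smul_const v
    exact hL.comp_hasDerivAt_of_eq 0 hline (zero_smul ℂ v).symm
  have hmaps : MapsTo g (ball 0 1) (closedBall (g 0) 1) := fun t ht => by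
    rw [hg0, mem_closedBall_zero_iff]
    exact hG1 _ (hv t ht)
  have hslope : dslope g 0 0 = L v := by rw [dslope_same, hg'.deriv]
  intro t ht
  have haff := Complex.affine_of_mapsTo_ball_of_norm_dslope_eq_div hgd hmaps
    (mem_ball_self one_pos) (by rw [hslope, hLv, div_one]) ht
  simpa only [hg0, hslope, sub_zero, zero_add, smul_eq_mul] using haff

lemma HasFDerivAt.apply_eq_of_eventuallyEq_on_axes {G : ℂ × ℂ → ℂ} {L : ℂ × ℂ →L[ℂ] ℂ}
    (hL : HasFDerivAt G L 0) {a b : ℂ} (h₁ : ∀ᶠ z in 𝓝 0, G (z, 0) = a * z)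
    (h₂ : ∀ᶠ w in 𝓝 0, G (0, w) = b * w) (v : ℂ × ℂ) : L v = a * v.1 + b * v.2 := by
  have hL₁ : L (1, 0) = a := by
    have hG₁ : HasDerivAt (fun z : ℂ => G (z, 0)) (L (1, 0)) 0 :=
      hL.comp_hasDerivAt_of_eq 0 ((hasDerivAt_id 0).prodMk (hasDerivAt_const 0 0)) rfl
    exact hG₁.unique (((hasDerivAt_id 0).const_mul a).congr_of_eventuallyEq h₁ |>.congr_deriv
      (mul_one a))
  have hL₂ : L (0, 1) = b := by
    have hG₂ : HasDerivAt (fun w : ℂ => G (0, w)) (L (0, 1)) 0 :=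
      hL.comp_hasDerivAt_of_eq 0 ((hasDerivAt_const 0 0).prodMk (hasDerivAt_id 0)) rfl
    exact hG₂.unique (((hasDerivAt_id 0).const_mul b).congr_of_eventuallyEq h₂ |>.congr_deriv
      (mul_one b))
  have hv : v = v.1 • ((1 : ℂ), (0 : ℂ)) + v.2 • ((0 : ℂ), (1 : ℂ)) := by simp
  rw [hv, map_add, map_smul, map_smul, hL₁, hL₂, smul_eq_mul, smul_eq_mul, mul_comm a, mul_comm b]
  simp

lemma frequently_nhdsNE_zero_of_forall_ofReal_mul {P : ℂ → Prop} {u : ℂ} (hu : u ≠ 0) {ε : ℝ}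
    (hε : 0 < ε) (h : ∀ s : ℝ, 0 < s → s < ε → P (s * u)) : ∃ᶠ w in 𝓝[≠] (0 : ℂ), P w := by
  have hlim : Tendsto (fun s : ℝ => (s : ℂ) * u) (𝓝[>] 0) (𝓝[≠] 0) := by
    refine tendsto_nhdsWithin_of_tendsto_nhds_of_eventually_within _ ?_ ?_
    · exact ((by fun_prop : Continuous fun s : ℝ => (s : ℂ) * u).tendsto' 0 0
        (by simp)).mono_left nhdsWithin_le_nhds
    · exact eventually_nhdsWithin_of_forall fun s hs =>
        mul_ne_zero (Complex.ofReal_ne_zero.2 (ne_of_gt hs)) hu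
  have hev : ∀ᶠ s : ℝ in 𝓝[>] 0, P (s * u) :=
    Filter.mem_of_superset (Ioo_mem_nhdsGT hε) fun s hs => h s hs.1 hs.2
  exact hlim.frequently hev.frequently

section Uniqueness

variable {G : ℂ × ℂ → ℂ} {c : ℂ}

lemma fderiv_apply_of_eqOn_TT (hG : DifferentiableOn ℂ G Delta)
    (hGT : EqOn G (fun p => p.1 + c * p.2) TT) (v : ℂ × ℂ) :
    fderiv ℂ G 0 v = v.1 + c * v.2 := by
  have hL : HasFDerivAt G (fderiv ℂ G 0) 0 :=
    (hG.differentiableAt (isOpen_Delta.mem_nhds (by simp [Delta]))).hasFDerivAt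
  simpa using hL.apply_eq_of_eventuallyEq_on_axes (a := 1) (b := c)
    (by filter_upwards [ball_mem_nhds (0 : ℂ) one_pos] with z hz
        simp [hGT (mk_zero_mem_TT (mem_ball_zero_iff.1 hz))])
    (by filter_upwards [ball_mem_nhds (0 : ℂ) one_pos] with w hw
        simp [hGT (zero_mk_mem_TT (mem_ball_zero_iff.1 hw))]) v

lemma apply_eq_on_cone (hc : ‖c‖ = 1) (hG : DifferentiableOn ℂ G Delta)
    (hG1 : ∀ p ∈ Delta, ‖G p‖ ≤ 1) (hGT : EqOn G (fun p => p.1 + c * p.2) TT) {z : ℂ} {s : ℝ}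
    (hs : 0 ≤ s) (hzs : ‖z‖ * (1 + s) < 1) :
    G (z, s * (conj c * z)) = z + c * (s * (conj c * z)) := by
  have hL : HasFDerivAt G (fderiv ℂ G 0) 0 :=
    (hG.differentiableAt (isOpen_Delta.mem_nhds (by simp [Delta]))).hasFDerivAt
  have hcc : c * conj c = 1 := by simp [RCLike.mul_conj, hc]
  have hr : (0 : ℝ) < 1 + s := by linarith
  have hr' : (1 + s : ℂ) ≠ 0 := by exact_mod_cast hr.ne'
  -- `t ↦ t • v` is a disc in `Δ` along which `p.1 + c * p.2` equals `t`: extremal for Schwarz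
  set v : ℂ × ℂ := (((1 + s)⁻¹ : ℝ), ((s / (1 + s) : ℝ) : ℂ) * conj c)
  have hv : ∀ t ∈ ball (0 : ℂ) 1, t • v ∈ Delta := by
    intro t ht
    have hnorm : ‖(t • v).1‖ + ‖(t • v).2‖ = ‖t‖ := by
      simp only [v, Prod.smul_mk, smul_eq_mul, norm_mul, Complex.norm_real, Complex.norm_conj, hc,
        Real.norm_eq_abs, abs_of_pos (inv_pos.2 hr), abs_of_nonneg (div_nonneg hs hr.le)]
      field_simp
    exact hnorm.trans_lt (mem_ball_zero_iff.1 ht)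
  have hLv : fderiv ℂ G 0 v = 1 := by
    rw [fderiv_apply_of_eqOn_TT hG hGT]
    simp only [v]
    push_cast
    field_simp
    linear_combination (s : ℂ) * hcc
  have hz : z * (1 + s) ∈ ball (0 : ℂ) 1 := by
    rw [mem_ball_zero_iff, norm_mul]
    exact_mod_cast (by rwa [Real.norm_eq_abs, abs_of_pos hr] : ‖z‖ * ‖(1 + s : ℝ)‖ < 1)
  have hpt : (z * (1 + s)) • v = (z, s * (conj c * z)) := by
    simp only [v, Prod.smul_mk, smul_eq_mul]
    push_cast
    ext <;> field_simp
  have hG0 : G 0 = 0 := by simpa using hGT (show (0 : ℂ × ℂ) ∈ TT from mk_zero_mem_TT (by simp))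
  have key := apply_smul_eq_of_norm_fderiv_eq_one hG hG1 hG0 hL hv (by rw [hLv, norm_one]) _ hz
  rw [hpt, hLv] at key
  rw [key]
  linear_combination (s : ℂ) * z * hcc.symm

/-- For fixed `z ≠ 0`, the cone of `apply_eq_on_cone` is a real half-line in the `w`-slice,
which accumulates at `0`; the identity theorem spreads the equality over the slice. -/
lemma eqOn_Delta_of_eqOn_TT (hc : ‖c‖ = 1) (hG : DifferentiableOn ℂ G Delta)
    (hG1 : ∀ p ∈ Delta, ‖G p‖ ≤ 1) (hGT : EqOn G (fun p => p.1 + c * p.2) TT) :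
    EqOn G (fun p => p.1 + c * p.2) Delta := by
  rintro ⟨z, w⟩ hp
  have hp' : ‖z‖ + ‖w‖ < 1 := hp
  rcases eq_or_ne z 0 with rfl | hz
  · exact hGT (zero_mk_mem_TT (by simpa using hp'))
  set R := 1 - ‖z‖
  have hR : 0 < R := by linarith [norm_nonneg w]
  have hslice : MapsTo (fun w' => (z, w')) (ball 0 R) Delta := fun w' hw' => by
    show ‖z‖ + ‖w'‖ < 1
    linarith [mem_ball_zero_iff.1 hw']
  have hGa : AnalyticOnNhd ℂ (fun w' => G (z, w')) (ball 0 R) :=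
    (hG.comp (differentiableOn_const z |>.prodMk differentiableOn_id) hslice).analyticOnNhd
      isOpen_ball
  have hHa : AnalyticOnNhd ℂ (fun w' => z + c * w') (ball 0 R) :=
    (by fun_prop : Differentiable ℂ fun w' => z + c * w').differentiableOn.analyticOnNhd
      isOpen_ball
  have hu : conj c * z ≠ 0 := mul_ne_zero (by simp [← norm_pos_iff, hc]) hz
  have hfreq : ∃ᶠ w' in 𝓝[≠] 0, G (z, w') = z + c * w' :=
    frequently_nhdsNE_zero_of_forall_ofReal_mul hu hR fun s hs hsR =>
      apply_eq_on_cone hc hG hG1 hGT hs.le (by nlinarith [norm_nonneg z])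
  exact hGa.eqOn_of_preconnected_of_frequently_eq hHa (convex_ball 0 R).isPreconnected
    (mem_ball_self hR) hfreq (mem_ball_zero_iff.2 (by linarith))

end Uniqueness

def mobiusForm (α : ℝ) (c : ℂ) (p : ℂ × ℂ) : ℂ := mobius α (p.1 + c * p.2)

section MobiusForm

variable {α : ℝ} {c : ℂ}

lemma norm_mobiusForm_le_one (hα : |α| < 1) (hc : ‖c‖ ≤ 1) {p : ℂ × ℂ} (hp : p ∈ Delta) :
    ‖mobiusForm α c p‖ ≤ 1 :=
  norm_mobius_le_one hα (norm_add_mul_lt_one_of_mem_Delta hc hp).le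

lemma differentiableOn_mobiusForm (hα : |α| < 1) (hc : ‖c‖ ≤ 1) :
    DifferentiableOn ℂ (mobiusForm α c) Delta :=
  DifferentiableOn.mobius (by fun_prop) fun _ hp =>
    one_sub_mul_ne_zero_of_abs_lt hα (norm_add_mul_lt_one_of_mem_Delta hc hp).le

lemma bddOnT_mobiusForm (hα : |α| < 1) (hc : ‖c‖ ≤ 1) : BddOnT (mobiusForm α c) :=
  ⟨1, fun _ hp => norm_mobiusForm_le_one hα hc (TT_subset_Delta hp)⟩

/-- Composing with the inverse Möbius map reduces to the linear form `p.1 + c * p.2`. -/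
lemma eqOn_mobiusForm_Delta (hα : |α| < 1) (hc : ‖c‖ = 1) {F : ℂ × ℂ → ℂ}
    (hF : DifferentiableOn ℂ F Delta) (hF1 : ∀ p ∈ Delta, ‖F p‖ ≤ 1)
    (hFT : EqOn F (mobiusForm α c) TT) : EqOn F (mobiusForm α c) Delta := by
  have hα' : |-α| < 1 := by rwa [abs_neg]
  have hden : ∀ p ∈ Delta, 1 - ((-α : ℝ) : ℂ) * F p ≠ 0 := fun p hp =>
    one_sub_mul_ne_zero_of_abs_lt hα' (hF1 p hp)
  have hlin := eqOn_Delta_of_eqOn_TT (G := fun p => mobius (-α) (F p)) hc (hF.mobius hden)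
    (fun p hp => norm_mobius_le_one hα' (hF1 p hp)) fun p hp => by
      dsimp only
      rw [hFT hp, mobiusForm,
        mobius_neg_mobius hα (norm_add_mul_lt_one_of_mem_Delta hc.le (TT_subset_Delta hp)).le]
  intro p hp
  have hGp : mobius (-α) (F p) = p.1 + c * p.2 := hlin hp
  rw [mobiusForm, ← hGp]
  simpa using (mobius_neg_mobius hα' (hF1 p hp)).symm

lemma eqOn_mobiusForm_Delta_of_supOn_eq (hα0 : α ≠ 0) (hα : |α| < 1) (hc : ‖c‖ = 1)
    {F : ℂ × ℂ → ℂ} (hF : DifferentiableOn ℂ F Delta) (hFT : EqOn F (mobiusForm α c) TT)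
    (hsup : supOn F Delta = supOn (mobiusForm α c) TT) : EqOn F (mobiusForm α c) Delta := by
  have hpos : 0 < supOn (mobiusForm α c) TT := by
    have h0 : ‖mobiusForm α c 0‖ = |α| := by simp [mobiusForm, mobius]
    refine (abs_pos.2 hα0).trans_le (h0 ▸ norm_le_supOn ⟨1, ?_⟩ (mk_zero_mem_TT (by simp)))
    rintro _ ⟨p, hp, rfl⟩
    exact norm_mobiusForm_le_one hα hc.le (TT_subset_Delta hp)
  have hle : supOn (mobiusForm α c) TT ≤ 1 :=
    supOn_le zero_le_one fun p hp => norm_mobiusForm_le_one hα hc.le (TT_subset_Delta hp)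
  refine eqOn_mobiusForm_Delta hα hc hF (fun p hp => ?_) hFT
  calc ‖F p‖ ≤ supOn F Delta := norm_le_supOn (bddAbove_of_supOn_pos (hsup ▸ hpos)) hp
    _ ≤ 1 := hsup ▸ hle

end MobiusForm

def crossComb (α : ℝ) : ℂ × ℂ → ℂ :=
  mobiusForm α 1 - mobiusForm α (-1) - mobiusForm (-α) 1 + mobiusForm (-α) (-1)

section CrossComb

variable {α : ℝ}

lemma crossComb_eq_zero_of_mem_TT {p : ℂ × ℂ} (hp : p ∈ TT) : crossComb α p = 0 := by
  obtain ⟨z, w⟩ := p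
  rcases hp with ⟨-, rfl : w = 0⟩ | ⟨rfl : z = 0, -⟩
  · simp [crossComb, mobiusForm]
  · have h : mobius (-α) w = -mobius α (-w) := by rw [← mobius_neg_neg, neg_neg]
    simp only [crossComb, mobiusForm, Pi.add_apply, Pi.sub_apply, zero_add, one_mul, neg_one_mul,
      h, mobius_neg_neg]
    ring

lemma differentiableOn_crossComb (hα : |α| < 1) : DifferentiableOn ℂ (crossComb α) Delta := by
  have hα' : |-α| < 1 := by rwa [abs_neg]
  exact (((differentiableOn_mobiusForm hα (by simp)).sub
    (differentiableOn_mobiusForm hα (by simp))).sub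
    (differentiableOn_mobiusForm hα' (by simp))).add (differentiableOn_mobiusForm hα' (by simp))

lemma norm_crossComb_le (hα : |α| < 1) {p : ℂ × ℂ} (hp : p ∈ Delta) : ‖crossComb α p‖ ≤ 4 := by
  have hα' : |-α| < 1 := by rwa [abs_neg]
  have h₁ := norm_mobiusForm_le_one hα (c := 1) (by simp) hp
  have h₂ := norm_mobiusForm_le_one hα (c := -1) (by simp) hp
  have h₃ := norm_mobiusForm_le_one hα' (c := 1) (by simp) hp
  have h₄ := norm_mobiusForm_le_one hα' (c := -1) (by simp) hp
  simp only [crossComb, Pi.add_apply, Pi.sub_apply]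
  linarith [norm_add_le (mobiusForm α 1 p - mobiusForm α (-1) p - mobiusForm (-α) 1 p)
    (mobiusForm (-α) (-1) p), norm_sub_le (mobiusForm α 1 p - mobiusForm α (-1) p)
    (mobiusForm (-α) 1 p), norm_sub_le (mobiusForm α 1 p) (mobiusForm α (-1) p)]

lemma crossComb_half_quarter : crossComb (1 / 2) (1 / 4, 1 / 4) = 1 / 5 := by
  norm_num [crossComb, mobiusForm, mobius]

end CrossComb

/-- There is no linear norm-preserving extension operator from the bounded holomorphic
functions on `T` to the bounded holomorphic functions on `Δ`. -/
theorem stmt_5 :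
    ¬ ∃ E : (ℂ × ℂ → ℂ) →ₗ[ℂ] (ℂ × ℂ → ℂ),
        ∀ f : ℂ × ℂ → ℂ, HoloOnT f → BddOnT f →
          DifferentiableOn ℂ (E f) Delta ∧ (∀ p ∈ TT, E f p = f p) ∧
            supOn (E f) Delta = supOn f TT := by
  rintro ⟨E, hE⟩
  have hext : ∀ α : ℝ, α ≠ 0 → |α| < 1 → ∀ c : ℂ, ‖c‖ = 1 → ∀ p ∈ Delta,
      E (mobiusForm α c) p = mobiusForm α c p := by
    intro α hα0 hα c hc
    obtain ⟨hd, hT, hsup⟩ := hE _ (holoOnT_of_differentiableOn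
      (differentiableOn_mobiusForm hα hc.le)) (bddOnT_mobiusForm hα hc.le)
    exact eqOn_mobiusForm_Delta_of_supOn_eq hα0 hα hc hd hT hsup
  have hα : |(1 / 2 : ℝ)| < 1 := by norm_num [abs_of_pos]
  have hEg : EqOn (E (crossComb (1 / 2))) (crossComb (1 / 2)) Delta := fun p hp => by
    simp (disch := first | exact hp | norm_num [abs_of_pos]) only [crossComb, map_add, map_sub,
      Pi.add_apply, Pi.sub_apply, hext]
  obtain ⟨-, -, hsup⟩ := hE (crossComb (1 / 2)) (holoOnT_of_differentiableOn
    (differentiableOn_crossComb hα)) ⟨0, fun p hp => by simp [crossComb_eq_zero_of_mem_TT hp]⟩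
  have hbdd : BddAbove ((fun p => ‖E (crossComb (1 / 2)) p‖) '' Delta) :=
    ⟨4, forall_mem_image.2 fun p hp => (hEg hp).symm ▸ norm_crossComb_le hα hp⟩
  have hq : ((1 / 4 : ℂ), (1 / 4 : ℂ)) ∈ Delta := by norm_num [Delta]
  have hzero := (norm_le_supOn hbdd hq).trans <| hsup.trans_le <|
    supOn_le le_rfl fun p hp => by simp [crossComb_eq_zero_of_mem_TT hp]
  rw [hEg hq, crossComb_half_quarter] at hzero
  norm_num at hzero
end
end

section
/- Let a ∈ ℂ with |a| < 1, let m_a(z) = (a − z)/(1 − conj(a)·z), and let f₁, f₂ : 𝔻 → ℂ be holomorphic with |f₁| ≤ 1, |f₂| ≤ 1 and f₁(0) = f₂(0) = a. Then for every λ ∈ Δ the point m_a(f₁(λ₁)) + m_a(f₂(λ₂)) lies in 𝔻, so that F(λ) = m_a( m_a(f₁(λ₁)) + m_a(f₂(λ₂)) ) is well defined; F is holomorphic on Δ, satisfies |F(λ)| ≤ 1 for all λ ∈ Δ, and F(z,0) = f₁(z), F(0,z) = f₂(z) for all z ∈ 𝔻. In particular F is a norm-preserving extension to Δ of the function on T determined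 by f₁ and f₂. -/
open Metric

noncomputable section

/-- The Möbius map `m_a(z) = (a - z)/(1 - ā z)`. -/
def ma (a z : ℂ) : ℂ := (a - z) / (1 - (starRingEnd ℂ) a * z)

/-!
Each `m_a ∘ fᵢ` maps the disc into the closed disc and vanishes at `0`, so by the Schwarz lemma
`|m_a(fᵢ(z))| ≤ |z|`. Hence `|m_a(f₁(λ₁)) + m_a(f₂(λ₂))| ≤ |λ₁| + |λ₂| < 1` on `Δ`, and `F`
is a composition of holomorphic maps with values in the closed disc. On `T` one of the summands
is `m_a(a) = 0`, and `m_a` is an involution of the closed disc.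
-/

open Complex Set

lemma one_sub_conj_mul_ne_zero {a w : ℂ} (ha : ‖a‖ < 1) (hw : ‖w‖ ≤ 1) :
    1 - starRingEnd ℂ a * w ≠ 0 := by
  have hlt : ‖starRingEnd ℂ a * w‖ < 1 := by
    rw [norm_mul, RCLike.norm_conj]
    exact mul_lt_one_of_nonneg_of_lt_one_left (norm_nonneg a) ha hw
  refine sub_ne_zero.mpr fun h => ?_
  simp [← h] at hlt

lemma normSq_one_sub_conj_mul_sub_normSq_sub (a w : ℂ) :
    normSq (1 - starRingEnd ℂ a * w) - normSq (a - w) = (1 - normSq a) * (1 - normSq w) := by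
  simp only [normSq_apply, sub_re, sub_im, mul_re, mul_im, conj_re, conj_im, one_re, one_im]
  ring

lemma norm_ma_le_one {a w : ℂ} (ha : ‖a‖ < 1) (hw : ‖w‖ ≤ 1) : ‖ma a w‖ ≤ 1 := by
  have hsq : ‖a - w‖ ^ 2 ≤ ‖1 - starRingEnd ℂ a * w‖ ^ 2 := by
    rw [Complex.sq_norm, Complex.sq_norm, ← sub_nonneg, normSq_one_sub_conj_mul_sub_normSq_sub,
      ← Complex.sq_norm, ← Complex.sq_norm]
    exact mul_nonneg (sub_nonneg.mpr (pow_le_one₀ (norm_nonneg a) ha.le))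
      (sub_nonneg.mpr (pow_le_one₀ (norm_nonneg w) hw))
  rw [ma, norm_div, div_le_one (norm_pos_iff.mpr (one_sub_conj_mul_ne_zero ha hw))]
  exact (pow_le_pow_iff_left₀ (norm_nonneg _) (norm_nonneg _) two_ne_zero).mp hsq

@[simp]
lemma ma_self (a : ℂ) : ma a a = 0 := by
  rw [ma, sub_self, zero_div]

lemma ma_ma {a w : ℂ} (ha : 1 - starRingEnd ℂ a * a ≠ 0)
    (hw : 1 - starRingEnd ℂ a * w ≠ 0) : ma a (ma a w) = w := by
  have hnum : a - ma a w = w * (1 - starRingEnd ℂ a * a) / (1 - starRingEnd ℂ a * w) := by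
    rw [ma, eq_div_iff hw, sub_mul, div_mul_cancel₀ _ hw]
    ring
  have hden : 1 - starRingEnd ℂ a * ma a w =
      (1 - starRingEnd ℂ a * a) / (1 - starRingEnd ℂ a * w) := by
    rw [ma, eq_div_iff hw, sub_mul, mul_assoc, div_mul_cancel₀ _ hw]
    ring
  rw [ma, hnum, hden, div_div_div_cancel_right₀ hw, mul_div_cancel_right₀ _ ha]

lemma DifferentiableAt.ma {E : Type*} [NormedAddCommGroup E] [NormedSpace ℂ E]
    {g : E → ℂ} {x : E} (a : ℂ) (hg : DifferentiableAt ℂ g x)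
    (hx : 1 - starRingEnd ℂ a * g x ≠ 0) :
    DifferentiableAt ℂ (fun y => _root_.ma a (g y)) x := by
  unfold _root_.ma
  fun_prop (disch := exact hx)

lemma norm_le_norm_of_mapsTo_closedBall {g : ℂ → ℂ} {R : ℝ} (hg : DifferentiableOn ℂ g (ball 0 R))
    (hmaps : MapsTo g (ball 0 R) (closedBall 0 R)) (hg0 : g 0 = 0) {z : ℂ}
    (hz : z ∈ ball (0 : ℂ) R) : ‖g z‖ ≤ ‖z‖ := by
  have hR : R ≠ 0 := (pos_of_mem_ball hz).ne'
  have hmaps' : MapsTo g (ball 0 R) (closedBall (g 0) R) := by rwa [hg0]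
  simpa [hg0, hR] using dist_le_div_mul_dist_of_mapsTo_ball hg hmaps' hz

lemma norm_ma_comp_le_norm {a : ℂ} (ha : ‖a‖ < 1) {f : ℂ → ℂ}
    (hf : DifferentiableOn ℂ f uD) (hb : ∀ z ∈ uD, ‖f z‖ ≤ 1) (hf0 : f 0 = a) {z : ℂ}
    (hz : z ∈ uD) : ‖ma a (f z)‖ ≤ ‖z‖ := by
  refine norm_le_norm_of_mapsTo_closedBall (g := fun x => ma a (f x)) (fun x hx => ?_)
    (fun x hx => ?_) (by simp [hf0]) hz
  · exact ((hf.differentiableAt (isOpen_ball.mem_nhds hx)).ma a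
      (one_sub_conj_mul_ne_zero ha (hb x hx))).differentiableWithinAt
  · exact mem_closedBall_zero_iff.mpr (norm_ma_le_one ha (hb x hx))

lemma mem_uD_of_mem_Delta {p : ℂ × ℂ} (hp : p ∈ Delta) : p.1 ∈ uD ∧ p.2 ∈ uD := by
  have hp' : ‖p.1‖ + ‖p.2‖ < 1 := hp
  simp only [uD, mem_ball_zero_iff]
  constructor <;> linarith [norm_nonneg p.1, norm_nonneg p.2]

theorem stmt_6 (a : ℂ) (ha : ‖a‖ < 1) (f₁ f₂ : ℂ → ℂ)
    (hf₁ : DifferentiableOn ℂ f₁ uD) (hf₂ : DifferentiableOn ℂ f₂ uD)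
    (hb₁ : ∀ z ∈ uD, ‖f₁ z‖ ≤ 1) (hb₂ : ∀ z ∈ uD, ‖f₂ z‖ ≤ 1)
    (h₁0 : f₁ 0 = a) (h₂0 : f₂ 0 = a) :
    (∀ p ∈ Delta, ma a (f₁ p.1) + ma a (f₂ p.2) ∈ uD) ∧
    DifferentiableOn ℂ (fun p : ℂ × ℂ => ma a (ma a (f₁ p.1) + ma a (f₂ p.2))) Delta ∧
    (∀ p ∈ Delta, ‖ma a (ma a (f₁ p.1) + ma a (f₂ p.2))‖ ≤ 1) ∧
    (∀ z ∈ uD, ma a (ma a (f₁ z) + ma a (f₂ 0)) = f₁ z) ∧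
    (∀ z ∈ uD, ma a (ma a (f₁ 0) + ma a (f₂ z)) = f₂ z) := by
  have hsum : ∀ p ∈ Delta, ‖ma a (f₁ p.1) + ma a (f₂ p.2)‖ < 1 := fun p hp => by
    obtain ⟨hp₁, hp₂⟩ := mem_uD_of_mem_Delta hp
    calc ‖ma a (f₁ p.1) + ma a (f₂ p.2)‖ ≤ ‖ma a (f₁ p.1)‖ + ‖ma a (f₂ p.2)‖ := norm_add_le _ _
      _ ≤ ‖p.1‖ + ‖p.2‖ := add_le_add (norm_ma_comp_le_norm ha hf₁ hb₁ h₁0 hp₁)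
          (norm_ma_comp_le_norm ha hf₂ hb₂ h₂0 hp₂)
      _ < 1 := hp
  have haa := one_sub_conj_mul_ne_zero ha ha.le
  refine ⟨fun p hp => mem_ball_zero_iff.mpr (hsum p hp), fun p hp => ?_,
    fun p hp => norm_ma_le_one ha (hsum p hp).le, fun z hz => ?_, fun z hz => ?_⟩
  · obtain ⟨hp₁, hp₂⟩ := mem_uD_of_mem_Delta hp
    have hd₁ := (hf₁.differentiableAt (isOpen_ball.mem_nhds hp₁)).comp p differentiableAt_fst
    have hd₂ := (hf₂.differentiableAt (isOpen_ball.mem_nhds hp₂)).comp p differentiableAt_snd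
    exact ((hd₁.ma a (one_sub_conj_mul_ne_zero ha (hb₁ _ hp₁))).add
      (hd₂.ma a (one_sub_conj_mul_ne_zero ha (hb₂ _ hp₂)))).ma a
      (one_sub_conj_mul_ne_zero ha (hsum p hp).le) |>.differentiableWithinAt
  · rw [h₂0, ma_self, add_zero, ma_ma haa (one_sub_conj_mul_ne_zero ha (hb₁ z hz))]
  · rw [h₁0, ma_self, zero_add, ma_ma haa (one_sub_conj_mul_ne_zero ha (hb₂ z hz))]
end
end

section
/- Let H = {λ ∈ 𝔻² : |λ₂|/(1−|λ₂|) < (1/2)·(1−|λ₁|)/(1+|λ₁|)} ∪ {λ ∈ 𝔻² : |λ₁|/(1−|λ₁|) < (1/2)·(1−|λ₂|)/(1+|λ₂|)}. For a bounded holomorphic function f on T determined by the pair (f₁,f₂), define (Ef)(λ) = f₁(λ₁) + f₂(λ₂) − f₁(0) for λ ∈ 𝔻². Then T ⊆ H, and for every nonconstant bounded holomorphic f on T and every λ ∈ H one has |Ef(λ)| < sup_{μ∈T} |f(μ)|. (Consequently the linear operator E gives a linear norm-preserving extension for a suitable open set G with T ⊆ H ⊆ G ⊆ 𝔻².) -/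
open Metric

noncomputable section

/-- The set `H ⊆ 𝔻²` from the proof of the linear extension theorem for `(G,T)`. -/
def Hset : Set (ℂ × ℂ) :=
  {p | (p.1 ∈ uD ∧ p.2 ∈ uD) ∧
    (‖p.2‖ / (1 - ‖p.2‖) < (1 / 2) * ((1 - ‖p.1‖) / (1 + ‖p.1‖)) ∨
     ‖p.1‖ / (1 - ‖p.1‖) < (1 / 2) * ((1 - ‖p.2‖) / (1 + ‖p.2‖)))}

/-!
Let `M` be the supremum of `|f|` on `T`; by the maximum principle and nonconstancy `f₁ / M` and
`f₂ / M` map `𝔻` into `𝔻`, with common value `a` at `0`. Schwarz–Pick at the origin gives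
`1 - |f₁(z)|/M ≥ (1 - |a|)(1 - |z|)/(1 + |z|)` and `|f₂(w) - f₂(0)|/M ≤ 2(1 - |a|)|w|/(1 - |w|)`,
and the inequality defining `H` makes the second bound smaller than the first, so
`|Ef(z, w)| ≤ |f₁(z)| + |f₂(w) - f₂(0)| < M` (and symmetrically).
-/

open ComplexConjugate

lemma norm_one_sub_conj_mul_sq_sub_norm_sub_sq (a w : ℂ) :
    ‖1 - conj a * w‖ ^ 2 - ‖w - a‖ ^ 2 = (1 - ‖a‖ ^ 2) * (1 - ‖w‖ ^ 2) := by
  simp only [← Complex.normSq_eq_norm_sq, Complex.normSq_apply, Complex.sub_re, Complex.sub_im,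
    Complex.mul_re, Complex.mul_im, Complex.conj_re, Complex.conj_im, Complex.one_re,
    Complex.one_im]
  ring

lemma norm_sub_lt_norm_one_sub_conj_mul {a w : ℂ} (ha : ‖a‖ < 1) (hw : ‖w‖ < 1) :
    ‖w - a‖ < ‖1 - conj a * w‖ := by
  have hpos : 0 < (1 - ‖a‖ ^ 2) * (1 - ‖w‖ ^ 2) := by
    have := norm_nonneg a
    have := norm_nonneg w
    apply mul_pos <;> nlinarith
  refine lt_of_pow_lt_pow_left₀ 2 (norm_nonneg _) ?_
  linarith [norm_one_sub_conj_mul_sq_sub_norm_sub_sq a w]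

lemma norm_one_sub_conj_mul_le {a : ℂ} (ha : ‖a‖ ≤ 1) (w : ℂ) :
    ‖1 - conj a * w‖ ≤ (1 - ‖a‖ ^ 2) + ‖a‖ * ‖w - a‖ := by
  have hconj : 1 - conj a * a = ((1 - ‖a‖ ^ 2 : ℝ) : ℂ) := by
    rw [Complex.conj_mul']
    push_cast
    rfl
  calc ‖1 - conj a * w‖ = ‖(1 - conj a * a) - conj a * (w - a)‖ := by ring_nf
    _ ≤ ‖1 - conj a * a‖ + ‖conj a * (w - a)‖ := norm_sub_le _ _
    _ = (1 - ‖a‖ ^ 2) + ‖a‖ * ‖w - a‖ := by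
      rw [hconj, Complex.norm_of_nonneg (by nlinarith [norm_nonneg a]), norm_mul,
        RCLike.norm_conj]

/-- The pseudo-hyperbolic distance of `a, w` dominates that of their norms `‖a‖, ‖w‖`. -/
lemma norm_sub_norm_le_mul_of_norm_sub_le {a w : ℂ} {r : ℝ} (ha : ‖a‖ < 1) (hw : ‖w‖ < 1)
    (h : ‖w - a‖ ≤ r * ‖1 - conj a * w‖) : ‖w‖ - ‖a‖ ≤ r * (1 - ‖a‖ * ‖w‖) := by
  have hid := norm_one_sub_conj_mul_sq_sub_norm_sub_sq a w
  set ρ := ‖a‖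
  set σ := ‖w‖
  set D := ‖1 - conj a * w‖
  have hρ : 0 ≤ ρ := norm_nonneg a
  have hσ : 0 ≤ σ := norm_nonneg w
  have hρσ : 0 < 1 - ρ * σ := by nlinarith
  have hD : 1 - ρ * σ ≤ D := by
    simpa [ρ, σ, D, norm_mul] using norm_sub_norm_le (1 : ℂ) (conj a * w)
  have hr : 0 ≤ r := by
    by_contra! hr
    nlinarith [norm_nonneg (w - a)]
  rcases le_or_gt 1 r with hr1 | hr1
  · nlinarith
  have hsq : (σ - ρ) ^ 2 ≤ (r * (1 - ρ * σ)) ^ 2 := by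
    have h2 : ‖w - a‖ ^ 2 ≤ r ^ 2 * D ^ 2 := by
      rw [← mul_pow]
      exact pow_le_pow_left₀ (norm_nonneg _) h 2
    have hD2 : (1 - ρ * σ) ^ 2 ≤ D ^ 2 := pow_le_pow_left₀ hρσ.le hD 2
    nlinarith [mul_le_mul_of_nonneg_right hD2 (by nlinarith : (0 : ℝ) ≤ 1 - r ^ 2)]
  exact (abs_le_of_sq_le_sq hsq (by positivity)).trans' (le_abs_self _)

lemma norm_map_lt_one {u : ℂ → ℂ} (hm : Set.MapsTo u (ball 0 1) (ball 0 1)) {z : ℂ}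
    (hz : ‖z‖ < 1) : ‖u z‖ < 1 :=
  mem_ball_zero_iff.mp (hm (mem_ball_zero_iff.mpr hz))

/-- The Schwarz–Pick lemma at the origin. -/
theorem norm_sub_map_zero_le_mul_norm_one_sub_conj_mul {u : ℂ → ℂ}
    (hd : DifferentiableOn ℂ u (ball 0 1)) (hm : Set.MapsTo u (ball 0 1) (ball 0 1)) {z : ℂ}
    (hz : ‖z‖ < 1) : ‖u z - u 0‖ ≤ ‖z‖ * ‖1 - conj (u 0) * u z‖ := by
  have hlt : ∀ {w : ℂ}, ‖w‖ < 1 → ‖u w - u 0‖ < ‖1 - conj (u 0) * u w‖ := fun hw ↦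
    norm_sub_lt_norm_one_sub_conj_mul (norm_map_lt_one hm (by simp)) (norm_map_lt_one hm hw)
  have hden : ∀ {w : ℂ}, ‖w‖ < 1 → 0 < ‖1 - conj (u 0) * u w‖ := fun hw ↦
    (norm_nonneg _).trans_lt (hlt hw)
  set φ : ℂ → ℂ := fun w ↦ (u w - u 0) / (1 - conj (u 0) * u w)
  have hφd : DifferentiableOn ℂ φ (ball 0 1) :=
    (hd.sub_const _).div ((differentiableOn_const _).sub ((differentiableOn_const _).mul hd))
      fun w hw ↦ norm_pos_iff.mp (hden (mem_ball_zero_iff.mp hw))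
  have hφm : Set.MapsTo φ (ball 0 1) (closedBall 0 1) := fun w hw ↦ by
    have hw := mem_ball_zero_iff.mp hw
    rw [mem_closedBall_zero_iff, norm_div, div_le_one (hden hw)]
    exact (hlt hw).le
  have hφz : ‖φ z‖ ≤ ‖z‖ := Complex.norm_le_norm_of_mapsTo_ball hφd hφm (by simp [φ]) hz
  calc ‖u z - u 0‖ = ‖φ z‖ * ‖1 - conj (u 0) * u z‖ := by
        rw [norm_div, div_mul_cancel₀ _ (hden hz).ne']
    _ ≤ ‖z‖ * ‖1 - conj (u 0) * u z‖ := by gcongr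

lemma one_sub_norm_map_zero_mul_le {u : ℂ → ℂ} (hd : DifferentiableOn ℂ u (ball 0 1))
    (hm : Set.MapsTo u (ball 0 1) (ball 0 1)) {z : ℂ} (hz : ‖z‖ < 1) :
    (1 - ‖u 0‖) * (1 - ‖z‖) ≤ (1 - ‖u z‖) * (1 + ‖z‖) := by
  have hsp := norm_sub_norm_le_mul_of_norm_sub_le (norm_map_lt_one hm (by simp))
    (norm_map_lt_one hm hz) (norm_sub_map_zero_le_mul_norm_one_sub_conj_mul hd hm hz)
  have hσ := norm_map_lt_one hm hz
  have hρ := norm_map_lt_one hm (z := 0) (by simp)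
  nlinarith [mul_nonneg (mul_nonneg (norm_nonneg z) (sub_nonneg.2 hσ.le)) (sub_nonneg.2 hρ.le)]

lemma norm_sub_map_zero_mul_le {u : ℂ → ℂ} (hd : DifferentiableOn ℂ u (ball 0 1))
    (hm : Set.MapsTo u (ball 0 1) (ball 0 1)) {z : ℂ} (hz : ‖z‖ < 1) :
    ‖u z - u 0‖ * (1 - ‖z‖) ≤ 2 * (1 - ‖u 0‖) * ‖z‖ := by
  have hsp := norm_sub_map_zero_le_mul_norm_one_sub_conj_mul hd hm hz
  have h0 := norm_map_lt_one hm (z := 0) (by simp)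
  have hnb := norm_one_sub_conj_mul_le h0.le (u z)
  have := norm_nonneg (u 0)
  nlinarith [mul_le_mul_of_nonneg_left hnb (norm_nonneg z),
    mul_nonneg (norm_nonneg z) (norm_nonneg (u z - u 0)),
    mul_nonneg (mul_nonneg (norm_nonneg z) (norm_nonneg (u 0))) (norm_nonneg (u z - u 0)),
    mul_nonneg (norm_nonneg z) (sq_nonneg (1 - ‖u 0‖))]

lemma norm_map_add_norm_sub_map_zero_lt_one {u v : ℂ → ℂ}
    (hud : DifferentiableOn ℂ u (ball 0 1)) (hvd : DifferentiableOn ℂ v (ball 0 1))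
    (hum : Set.MapsTo u (ball 0 1) (ball 0 1)) (hvm : Set.MapsTo v (ball 0 1) (ball 0 1))
    (h0 : u 0 = v 0) {z w : ℂ} (hz : ‖z‖ < 1) (hw : ‖w‖ < 1)
    (hzw : 2 * ‖w‖ * (1 + ‖z‖) < (1 - ‖z‖) * (1 - ‖w‖)) :
    ‖u z‖ + ‖v w - v 0‖ < 1 := by
  have hu := one_sub_norm_map_zero_mul_le hud hum hz
  have hv := norm_sub_map_zero_mul_le hvd hvm hw
  rw [← h0] at hv
  have hρ : 0 < 1 - ‖u 0‖ := sub_pos.2 (norm_map_lt_one hum (by simp))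
  have hr : 0 < 1 + ‖z‖ := by positivity
  have hq : 0 < 1 - ‖w‖ := sub_pos.2 hw
  have key : ‖v w - u 0‖ * ((1 - ‖w‖) * (1 + ‖z‖)) < (1 - ‖u z‖) * ((1 - ‖w‖) * (1 + ‖z‖)) :=
    calc ‖v w - u 0‖ * ((1 - ‖w‖) * (1 + ‖z‖))
        ≤ 2 * (1 - ‖u 0‖) * ‖w‖ * (1 + ‖z‖) := by nlinarith
      _ < (1 - ‖u 0‖) * ((1 - ‖z‖) * (1 - ‖w‖)) := by nlinarith
      _ ≤ (1 - ‖u z‖) * ((1 - ‖w‖) * (1 + ‖z‖)) := by nlinarith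
  have := lt_of_mul_lt_mul_right key (by positivity)
  rw [← h0]
  linarith

lemma norm_map_add_norm_sub_map_zero_lt {f g : ℂ → ℂ} {M : ℝ}
    (hfd : DifferentiableOn ℂ f (ball 0 1)) (hgd : DifferentiableOn ℂ g (ball 0 1))
    (hfm : Set.MapsTo f (ball 0 1) (ball 0 M)) (hgm : Set.MapsTo g (ball 0 1) (ball 0 M))
    (h0 : f 0 = g 0) {z w : ℂ} (hz : ‖z‖ < 1) (hw : ‖w‖ < 1)
    (hzw : 2 * ‖w‖ * (1 + ‖z‖) < (1 - ‖z‖) * (1 - ‖w‖)) :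
    ‖f z‖ + ‖g w - g 0‖ < M := by
  have hM : 0 < M := (norm_nonneg _).trans_lt (mem_ball_zero_iff.mp (hfm (mem_ball_self one_pos)))
  have hscale : ∀ {h : ℂ → ℂ}, Set.MapsTo h (ball 0 1) (ball 0 M) →
      Set.MapsTo (fun z ↦ h z / M) (ball 0 1) (ball 0 1) := fun hm x hx ↦ by
    rw [mem_ball_zero_iff, norm_div, Complex.norm_of_nonneg hM.le, div_lt_one hM]
    exact mem_ball_zero_iff.mp (hm hx)
  have := norm_map_add_norm_sub_map_zero_lt_one (hfd.div_const (M : ℂ)) (hgd.div_const (M : ℂ))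
    (hscale hfm) (hscale hgm) (by simp only [h0]) hz hw hzw
  rwa [← sub_div, norm_div, norm_div, Complex.norm_of_nonneg hM.le, ← add_div,
    div_lt_one hM] at this

lemma norm_lt_of_not_exists_eqOn_const {f g : ℂ → ℂ} {M : ℝ}
    (hfd : DifferentiableOn ℂ f (ball 0 1)) (hgd : DifferentiableOn ℂ g (ball 0 1))
    (h0 : f 0 = g 0) (hfM : ∀ z ∈ ball (0 : ℂ) 1, ‖f z‖ ≤ M)
    (hgM : ∀ z ∈ ball (0 : ℂ) 1, ‖g z‖ ≤ M)
    (hnc : ¬ ∃ c : ℂ, (∀ z ∈ ball (0 : ℂ) 1, f z = c) ∧ ∀ z ∈ ball (0 : ℂ) 1, g z = c)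
    {z₀ : ℂ} (hz₀ : z₀ ∈ ball (0 : ℂ) 1) : ‖f z₀‖ < M := by
  refine (hfM z₀ hz₀).lt_of_ne fun hmax ↦ hnc ⟨f z₀, ?_⟩
  have hconn : IsPreconnected (ball (0 : ℂ) 1) := (convex_ball 0 1).isPreconnected
  have hzero : (0 : ℂ) ∈ ball (0 : ℂ) 1 := mem_ball_self one_pos
  have hf : Set.EqOn f (fun _ ↦ f z₀) (ball 0 1) :=
    Complex.eqOn_of_isPreconnected_of_isMaxOn_norm hconn isOpen_ball hfd hz₀
      fun z hz ↦ (hfM z hz).trans hmax.ge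
  have hg : Set.EqOn g (fun _ ↦ g 0) (ball 0 1) :=
    Complex.eqOn_of_isPreconnected_of_isMaxOn_norm hconn isOpen_ball hgd hzero
      fun z hz ↦ (hgM z hz).trans (by rw [Function.comp_apply, ← h0, hf hzero, hmax])
  exact ⟨hf, fun z hz ↦ (hg hz).trans (by rw [← h0, hf hzero])⟩

lemma TT_subset_Hset : TT ⊆ Hset := by
  have hzero : (0 : ℂ) ∈ uD := mem_ball_self one_pos
  have hpos : ∀ z ∈ uD, 0 < (1 - ‖z‖) / (1 + ‖z‖) := fun z hz ↦
    div_pos (sub_pos.2 (mem_ball_zero_iff.mp hz)) (by positivity)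
  rintro ⟨z, w⟩ (⟨hz, rfl⟩ | ⟨rfl, hw⟩)
  · exact ⟨⟨hz, hzero⟩, Or.inl (by simpa using hpos z hz)⟩
  · exact ⟨⟨hzero, hw⟩, Or.inr (by simpa using hpos w hw)⟩

lemma two_mul_mul_lt_of_div_lt {r q : ℝ} (hr : 0 ≤ r) (hq : q < 1)
    (h : q / (1 - q) < (1 / 2) * ((1 - r) / (1 + r))) : 2 * q * (1 + r) < (1 - r) * (1 - q) := by
  rw [div_lt_iff₀ (sub_pos.2 hq)] at h
  rw [mul_div_assoc', div_mul_eq_mul_div, lt_div_iff₀ (by positivity)] at h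
  linarith

lemma norm_le_supOn_TT {f₁ f₂ : ℂ → ℂ} (h0 : f₁ 0 = f₂ 0)
    (hbdd : ∃ C : ℝ, ∀ z ∈ uD, ‖f₁ z‖ ≤ C ∧ ‖f₂ z‖ ≤ C) :
    (∀ z ∈ uD, ‖f₁ z‖ ≤ supOn (fun q ↦ f₁ q.1 + f₂ q.2 - f₁ 0) TT) ∧
      ∀ z ∈ uD, ‖f₂ z‖ ≤ supOn (fun q ↦ f₁ q.1 + f₂ q.2 - f₁ 0) TT := by
  obtain ⟨C, hC⟩ := hbdd
  have hbddAbove : BddAbove ((fun q : ℂ × ℂ ↦ ‖f₁ q.1 + f₂ q.2 - f₁ 0‖) '' TT) := by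
    refine ⟨C, ?_⟩
    rintro _ ⟨⟨z, w⟩, ⟨hz, rfl⟩ | ⟨rfl, hw⟩, rfl⟩
    · simpa [h0] using (hC z hz).1
    · simpa using (hC w hw).2
  refine ⟨fun z hz ↦ le_csSup hbddAbove ⟨(z, 0), Or.inl ⟨hz, rfl⟩, by simp [h0]⟩,
    fun z hz ↦ le_csSup hbddAbove ⟨(0, z), Or.inr ⟨rfl, hz⟩, by simp⟩⟩

theorem stmt_7 (f₁ f₂ : ℂ → ℂ)
    (hf₁ : DifferentiableOn ℂ f₁ uD) (hf₂ : DifferentiableOn ℂ f₂ uD)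
    (h0 : f₁ 0 = f₂ 0)
    (hbdd : ∃ C : ℝ, ∀ z ∈ uD, ‖f₁ z‖ ≤ C ∧ ‖f₂ z‖ ≤ C)
    (hnc : ¬ ∃ c : ℂ, (∀ z ∈ uD, f₁ z = c) ∧ (∀ z ∈ uD, f₂ z = c)) :
    TT ⊆ Hset ∧
      ∀ p ∈ Hset, ‖f₁ p.1 + f₂ p.2 - f₁ 0‖ <
        supOn (fun q => f₁ q.1 + f₂ q.2 - f₁ 0) TT := by
  refine ⟨TT_subset_Hset, ?_⟩
  obtain ⟨hle₁, hle₂⟩ := norm_le_supOn_TT h0 hbdd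
  set M := supOn (fun q => f₁ q.1 + f₂ q.2 - f₁ 0) TT
  have hm₁ : Set.MapsTo f₁ uD (ball 0 M) := fun z hz ↦ mem_ball_zero_iff.mpr
    (norm_lt_of_not_exists_eqOn_const hf₁ hf₂ h0 hle₁ hle₂ hnc hz)
  have hm₂ : Set.MapsTo f₂ uD (ball 0 M) := fun z hz ↦ mem_ball_zero_iff.mpr
    (norm_lt_of_not_exists_eqOn_const hf₂ hf₁ h0.symm hle₂ hle₁
      (fun ⟨c, hc₂, hc₁⟩ ↦ hnc ⟨c, hc₁, hc₂⟩) hz)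
  rintro ⟨z, w⟩ ⟨⟨hz, hw⟩, h | h⟩
  all_goals
    have hz := mem_ball_zero_iff.mp hz
    have hw := mem_ball_zero_iff.mp hw
  · calc ‖f₁ z + f₂ w - f₁ 0‖ ≤ ‖f₁ z‖ + ‖f₂ w - f₂ 0‖ := by
          rw [h0, add_sub_assoc]; exact norm_add_le _ _
      _ < M := norm_map_add_norm_sub_map_zero_lt hf₁ hf₂ hm₁ hm₂ h0 hz hw
          (two_mul_mul_lt_of_div_lt (norm_nonneg z) hw h)
  · calc ‖f₁ z + f₂ w - f₁ 0‖ ≤ ‖f₂ w‖ + ‖f₁ z - f₁ 0‖ := by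
          rw [add_comm, add_sub_assoc]; exact norm_add_le _ _
      _ < M := norm_map_add_norm_sub_map_zero_lt hf₂ hf₁ hm₂ hm₁ h0.symm hw hz
          (two_mul_mul_lt_of_div_lt (norm_nonneg w) hz h)
end
end

section
/- Let π : 𝔻² → 𝒱 be the surjective map π(λ) = (λ₁², λ₂², λ₁λ₂). A function Φ : 𝒱 → ℂ is holomorphic on 𝒱 with sup_{z∈𝒱} |Φ(z)| ≤ 1 if and only if Φ∘π : 𝔻² → ℂ is holomorphic, even (i.e. (Φ∘π)(−λ) = (Φ∘π)(λ) for all λ ∈ 𝔻²), and satisfies |(Φ∘π)(λ)| ≤ 1 for all λ ∈ 𝔻². -/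
open Metric

noncomputable section

/-- The open unit bidisc `𝔻²` in `ℂ²`. -/
def biD : Set (ℂ × ℂ) := {p | p.1 ∈ uD ∧ p.2 ∈ uD}

/-- The open unit tridisc `𝔻³` in `ℂ³`. -/
def triD : Set (ℂ × ℂ × ℂ) := {z | z.1 ∈ uD ∧ z.2.1 ∈ uD ∧ z.2.2 ∈ uD}

/-- The variety `𝒱 = {z ∈ 𝔻³ : z₃² = z₁ z₂}`. -/
def calV : Set (ℂ × ℂ × ℂ) := {z | z ∈ triD ∧ z.2.2 ^ 2 = z.1 * z.2.1}

/-- A function is holomorphic on `𝒱` if near every point of `𝒱` it extends to a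
holomorphic function on an open neighbourhood. -/
def HoloOnV (f : ℂ × ℂ × ℂ → ℂ) : Prop :=
  ∀ p ∈ calV, ∃ U : Set (ℂ × ℂ × ℂ), IsOpen U ∧ p ∈ U ∧
    ∃ F : ℂ × ℂ × ℂ → ℂ, DifferentiableOn ℂ F U ∧ ∀ q ∈ U ∩ calV, F q = f q

/-- The two-to-one branched covering `π : 𝔻² → 𝒱`, `π(λ) = (λ₁², λ₂², λ₁λ₂)`. -/
def piMap (l : ℂ × ℂ) : ℂ × ℂ × ℂ := (l.1 ^ 2, l.2 ^ 2, l.1 * l.2)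

/-!
For `z = π(λ)` the kernel `(w₁ w₂ + z₃) / ((w₁² - z₁) (w₂² - z₂))` is the average of the Cauchy
kernels `1 / ((w₁ - λ₁) (w₂ - λ₂))` and `1 / ((w₁ + λ₁) (w₂ + λ₂))`. So if `f = Φ ∘ π` is
holomorphic and even on `𝔻²`, integrating `f` against this kernel over the torus
`|w₁| = |w₂| = r` gives, by Cauchy's formula in each variable, `(f λ + f (-λ)) / 2 = f λ` whenever
`|λ₁|, |λ₂| < r`. As a function of `z` the integral is holomorphic on `{|z₁|, |z₂| < r²} ⊆ ℂ³`,
so it is a local holomorphic extension of `Φ`. Conversely, composing a local extension with the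
holomorphic map `π` shows that `Φ ∘ π` is holomorphic, and the bounds agree because `π` maps
`𝔻²` onto `𝒱`.
-/

open Complex MeasureTheory Set Filter Topology
open scoped Real

section Parametric

variable {α P H E : Type*} [TopologicalSpace α] [MeasurableSpace α] [OpensMeasurableSpace α]
  [SecondCountableTopology α]
  [NormedAddCommGroup P] [NormedSpace ℂ P] [NormedAddCommGroup H] [NormedSpace ℂ H] [ProperSpace H]
  [NormedAddCommGroup E] [NormedSpace ℂ E]

theorem differentiableAt_integral_smul_of_contDiffOn {μ : Measure α} {R : P × H → E}
    {W : Set (P × H)} (hW : IsOpen W) (hR : ContDiffOn ℂ 1 R W) {γ : α → P} (hγ : Continuous γ)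
    {T : Set P} (hT : IsCompact T) (hγT : ∀ θ, γ θ ∈ T) {g : α → ℂ} (hg : Integrable g μ)
    {x₀ : H} (hx₀ : T ×ˢ {x₀} ⊆ W) :
    DifferentiableAt ℂ (fun z => ∫ θ, g θ • R (γ θ, z) ∂μ) x₀ := by
  obtain ⟨ε, hε, hεW⟩ : ∃ ε > 0, T ×ˢ closedBall x₀ ε ⊆ W := by
    obtain ⟨u, v, -, hv, hTu, hx₀v, huv⟩ :=
      generalized_tube_lemma hT isCompact_singleton hW hx₀
    obtain ⟨ε, hε, hεv⟩ := nhds_basis_closedBall.mem_iff.1 (hv.mem_nhds (hx₀v rfl))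
    exact ⟨ε, hε, (prod_mono hTu hεv).trans huv⟩
  have hmem : ∀ θ, ∀ z ∈ closedBall x₀ ε, (γ θ, z) ∈ W := fun θ z hz => hεW ⟨hγT θ, hz⟩
  set D : P × H → H →L[ℂ] E := fun q => (fderiv ℂ R q).comp (ContinuousLinearMap.inr ℂ P H)
  have hD : ContinuousOn D W :=
    (hR.continuousOn_fderiv_of_isOpen hW le_rfl).clm_comp continuousOn_const
  have hRD : ∀ q ∈ W, HasFDerivAt (fun z => R (q.1, z)) (D q) q.2 := fun q hq =>
    ((hR.differentiableOn one_ne_zero q hq).differentiableAt (hW.mem_nhds hq)).hasFDerivAt.comp q.2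
      (hasFDerivAt_prodMk_right q.1 q.2)
  obtain ⟨C, hC⟩ := (hT.prod (isCompact_closedBall x₀ ε)).exists_bound_of_continuousOn
    (hD.mono hεW)
  have hRγ : ∀ z ∈ closedBall x₀ ε, Continuous fun θ => R (γ θ, z) := fun z hz =>
    hR.continuousOn.comp_continuous (hγ.prodMk continuous_const) fun θ => hmem θ z hz
  have hx₀ε : x₀ ∈ closedBall x₀ ε := mem_closedBall_self hε.le
  refine (hasFDerivAt_integral_of_dominated_of_fderiv_le (F' := fun z θ => g θ • D (γ θ, z))
    (bound := fun θ => ‖g θ‖ * C) (closedBall_mem_nhds x₀ hε) ?_ ?_ ?_ ?_ ?_ ?_).differentiableAt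
  · filter_upwards [closedBall_mem_nhds x₀ hε] with z hz
    exact hg.aestronglyMeasurable.smul (hRγ z hz).aestronglyMeasurable
  · obtain ⟨C₀, hC₀⟩ := (hT.prod isCompact_singleton).exists_bound_of_continuousOn
      (hR.continuousOn.mono hx₀)
    exact hg.smul_of_top_left (memLp_top_of_bound
      (hRγ x₀ hx₀ε).aestronglyMeasurable C₀
      (ae_of_all _ fun θ => hC₀ _ ⟨hγT θ, rfl⟩))
  · exact hg.aestronglyMeasurable.smul (hD.comp_continuous (hγ.prodMk continuous_const)
      fun θ => hmem θ x₀ hx₀ε).aestronglyMeasurable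
  · refine ae_of_all _ fun θ z hz => ?_
    rw [norm_smul]
    exact mul_le_mul_of_nonneg_left (hC _ ⟨hγT θ, hz⟩) (norm_nonneg _)
  · exact hg.norm.mul_const C
  · exact ae_of_all _ fun θ z hz => (hRD _ (hmem θ z hz)).const_smul (g θ)

end Parametric

section Torus

variable {E : Type*} [NormedAddCommGroup E] [NormedSpace ℂ E]

theorem DifferentiableOn.circleIntegral_circleIntegral_sub_inv_smul [CompleteSpace E]
    {f : ℂ × ℂ → E} {c : ℂ × ℂ} {R₁ R₂ : ℝ} {a : ℂ × ℂ}
    (hf : DifferentiableOn ℂ f (closedBall c.1 R₁ ×ˢ closedBall c.2 R₂))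
    (ha : a ∈ ball c.1 R₁ ×ˢ ball c.2 R₂) :
    (∮ w₁ in C(c.1, R₁), ∮ w₂ in C(c.2, R₂), (w₁ - a.1)⁻¹ • (w₂ - a.2)⁻¹ • f (w₁, w₂)) =
      (2 * π * I) • (2 * π * I) • f a := by
  have inner : EqOn (fun w₁ => ∮ w₂ in C(c.2, R₂), (w₁ - a.1)⁻¹ • (w₂ - a.2)⁻¹ • f (w₁, w₂))
      (fun w₁ => (2 * π * I) • (w₁ - a.1)⁻¹ • f (w₁, a.2)) (sphere c.1 R₁) := fun w₁ hw₁ => by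
    have hslice : DifferentiableOn ℂ (fun w₂ => f (w₁, w₂)) (closedBall c.2 R₂) :=
      hf.comp (by fun_prop) fun w₂ hw₂ => ⟨sphere_subset_closedBall hw₁, hw₂⟩
    dsimp only
    rw [circleIntegral.integral_smul, hslice.circleIntegral_sub_inv_smul ha.2, smul_comm]
  have hslice : DifferentiableOn ℂ (fun w₁ => f (w₁, a.2)) (closedBall c.1 R₁) :=
    hf.comp (by fun_prop) fun w₁ hw₁ => ⟨hw₁, ball_subset_closedBall ha.2⟩
  rw [circleIntegral.integral_congr (pos_of_mem_ball ha.1).le inner,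
    circleIntegral.integral_smul, hslice.circleIntegral_sub_inv_smul ha.1]

def torusIntegral₂ (g : ℂ × ℂ → E) (r : ℝ) : E :=
  ∫ θ in Ioc 0 (2 * π) ×ˢ Ioc 0 (2 * π),
    (deriv (circleMap 0 r) θ.1 * deriv (circleMap 0 r) θ.2) •
      g (circleMap 0 r θ.1, circleMap 0 r θ.2)

variable {g g' : ℂ × ℂ → E} {r : ℝ}

theorem integrableOn_torusIntegral₂ (hr : 0 ≤ r)
    (hg : ContinuousOn g (sphere 0 r ×ˢ sphere 0 r)) :
    IntegrableOn (fun θ : ℝ × ℝ => (deriv (circleMap 0 r) θ.1 * deriv (circleMap 0 r) θ.2) •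
      g (circleMap 0 r θ.1, circleMap 0 r θ.2)) (Ioc 0 (2 * π) ×ˢ Ioc 0 (2 * π)) := by
  have hgθ : Continuous fun θ : ℝ × ℝ => g (circleMap 0 r θ.1, circleMap 0 r θ.2) :=
    hg.comp_continuous (by fun_prop) fun θ =>
      ⟨circleMap_mem_sphere 0 hr θ.1, circleMap_mem_sphere 0 hr θ.2⟩
  have hcont : Continuous fun θ : ℝ × ℝ =>
      (deriv (circleMap 0 r) θ.1 * deriv (circleMap 0 r) θ.2) •
        g (circleMap 0 r θ.1, circleMap 0 r θ.2) := by
    simp only [deriv_circleMap]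
    exact Continuous.smul (by fun_prop) hgθ
  exact (hcont.continuousOn.integrableOn_compact (isCompact_Icc.prod isCompact_Icc)).mono_set
    (prod_mono Ioc_subset_Icc_self Ioc_subset_Icc_self)

theorem torusIntegral₂_congr (hr : 0 ≤ r) (h : EqOn g g' (sphere 0 r ×ˢ sphere 0 r)) :
    torusIntegral₂ g r = torusIntegral₂ g' r := by
  unfold torusIntegral₂
  congr! 3 with θ
  exact h ⟨circleMap_mem_sphere 0 hr θ.1, circleMap_mem_sphere 0 hr θ.2⟩

theorem torusIntegral₂_add (hr : 0 ≤ r) (hg : ContinuousOn g (sphere 0 r ×ˢ sphere 0 r))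
    (hg' : ContinuousOn g' (sphere 0 r ×ˢ sphere 0 r)) :
    torusIntegral₂ (fun w => g w + g' w) r = torusIntegral₂ g r + torusIntegral₂ g' r := by
  simp only [torusIntegral₂, smul_add]
  exact integral_add (integrableOn_torusIntegral₂ hr hg) (integrableOn_torusIntegral₂ hr hg')

theorem torusIntegral₂_smul (a : ℂ) :
    torusIntegral₂ (fun w => a • g w) r = a • torusIntegral₂ g r := by
  simp only [torusIntegral₂, smul_comm _ a]
  exact integral_smul a _

theorem torusIntegral₂_eq_circleIntegral [CompleteSpace E] (hr : 0 ≤ r)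
    (hg : ContinuousOn g (sphere 0 r ×ˢ sphere 0 r)) :
    torusIntegral₂ g r = ∮ w₁ in C(0, r), ∮ w₂ in C(0, r), g (w₁, w₂) := by
  have hint := integrableOn_torusIntegral₂ hr hg
  rw [Measure.volume_eq_prod] at hint
  rw [torusIntegral₂, Measure.volume_eq_prod, setIntegral_prod _ hint]
  simp only [circleIntegral, intervalIntegral.integral_of_le Real.two_pi_pos.le, mul_smul,
    integral_smul]

end Torus

theorem sub_ne_zero_of_mem_sphere_of_mem_ball {X : Type*} [SeminormedAddGroup X] {c w b : X}
    {r : ℝ} (hw : w ∈ sphere c r) (hb : b ∈ ball c r) : w - b ≠ 0 :=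
  sub_ne_zero.2 fun h => (h ▸ hb : w ∈ ball c r).ne hw

section Cauchy

variable {E : Type*} [NormedAddCommGroup E] [NormedSpace ℂ E] [CompleteSpace E]

def cauchyKernel₂ (a w : ℂ × ℂ) : ℂ := (w.1 - a.1)⁻¹ * (w.2 - a.2)⁻¹

theorem continuousOn_cauchyKernel₂ {a : ℂ × ℂ} {r : ℝ} (ha : a ∈ ball 0 r ×ˢ ball 0 r) :
    ContinuousOn (cauchyKernel₂ a) (sphere 0 r ×ˢ sphere 0 r) := by
  refine ContinuousOn.mul ?_ ?_ <;> refine ContinuousOn.inv₀ (by fun_prop) fun w hw => ?_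
  exacts [sub_ne_zero_of_mem_sphere_of_mem_ball hw.1 ha.1,
    sub_ne_zero_of_mem_sphere_of_mem_ball hw.2 ha.2]

theorem torusIntegral₂_cauchyKernel₂_smul {g : ℂ × ℂ → E} {r : ℝ} {a : ℂ × ℂ}
    (hg : DifferentiableOn ℂ g (closedBall 0 r ×ˢ closedBall 0 r))
    (ha : a ∈ ball 0 r ×ˢ ball 0 r) :
    torusIntegral₂ (fun w => cauchyKernel₂ a w • g w) r = (2 * π * I) ^ 2 • g a := by
  have hcont : ContinuousOn (fun w => cauchyKernel₂ a w • g w) (sphere 0 r ×ˢ sphere 0 r) :=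
    (continuousOn_cauchyKernel₂ ha).smul
      (hg.continuousOn.mono (prod_mono sphere_subset_closedBall sphere_subset_closedBall))
  rw [torusIntegral₂_eq_circleIntegral (pos_of_mem_ball ha.1).le hcont]
  simp only [cauchyKernel₂, mul_smul]
  rw [sq, mul_smul]
  exact hg.circleIntegral_circleIntegral_sub_inv_smul (c := 0) ha

end Cauchy

def coneKernel (w : ℂ × ℂ) (z : ℂ × ℂ × ℂ) : ℂ :=
  (w.1 * w.2 + z.2.2) / ((w.1 ^ 2 - z.1) * (w.2 ^ 2 - z.2.1))

theorem neg_mem_ball_prod {r : ℝ} {l : ℂ × ℂ} (hl : l ∈ ball 0 r ×ˢ ball 0 r) :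
    -l ∈ ball (0 : ℂ) r ×ˢ ball 0 r := by
  simpa using hl

theorem coneKernel_piMap {r : ℝ} {w l : ℂ × ℂ} (hw : w ∈ sphere 0 r ×ˢ sphere 0 r)
    (hl : l ∈ ball 0 r ×ˢ ball 0 r) :
    coneKernel w (piMap l) = 2⁻¹ * (cauchyKernel₂ l w + cauchyKernel₂ (-l) w) := by
  have h₁ := sub_ne_zero_of_mem_sphere_of_mem_ball hw.1 hl.1
  have h₂ := sub_ne_zero_of_mem_sphere_of_mem_ball hw.2 hl.2
  have h₁' := sub_ne_zero_of_mem_sphere_of_mem_ball hw.1 (neg_mem_ball_prod hl).1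
  have h₂' := sub_ne_zero_of_mem_sphere_of_mem_ball hw.2 (neg_mem_ball_prod hl).2
  simp only [coneKernel, cauchyKernel₂, piMap, Prod.fst_neg, Prod.snd_neg] at *
  rw [show w.1 ^ 2 - l.1 ^ 2 = (w.1 - l.1) * (w.1 - -l.1) by ring,
    show w.2 ^ 2 - l.2 ^ 2 = (w.2 - l.2) * (w.2 - -l.2) by ring]
  field_simp
  ring

def extendV (f : ℂ × ℂ → ℂ) (r : ℝ) (z : ℂ × ℂ × ℂ) : ℂ :=
  ((2 * π * I) ^ 2)⁻¹ • torusIntegral₂ (fun w => coneKernel w z • f w) r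

theorem extendV_piMap {f : ℂ × ℂ → ℂ} {r : ℝ} {l : ℂ × ℂ}
    (hf : DifferentiableOn ℂ f (closedBall 0 r ×ˢ closedBall 0 r)) (heven : f (-l) = f l)
    (hl : l ∈ ball 0 r ×ˢ ball 0 r) :
    extendV f r (piMap l) = f l := by
  have hr : 0 ≤ r := (pos_of_mem_ball hl.1).le
  have hl' := neg_mem_ball_prod hl
  have hfc : ContinuousOn f (sphere 0 r ×ˢ sphere 0 r) :=
    hf.continuousOn.mono (prod_mono sphere_subset_closedBall sphere_subset_closedBall)
  have hsplit : EqOn (fun w => coneKernel w (piMap l) • f w)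
      (fun w => (2 : ℂ)⁻¹ • (cauchyKernel₂ l w • f w + cauchyKernel₂ (-l) w • f w))
      (sphere 0 r ×ˢ sphere 0 r) := fun w hw => by
    simp only [coneKernel_piMap hw hl, mul_smul, add_smul]
  rw [extendV, torusIntegral₂_congr hr hsplit, torusIntegral₂_smul,
    torusIntegral₂_add (g := fun w => cauchyKernel₂ l w • f w)
      (g' := fun w => cauchyKernel₂ (-l) w • f w) hr ((continuousOn_cauchyKernel₂ hl).smul hfc)
      ((continuousOn_cauchyKernel₂ hl').smul hfc),
    torusIntegral₂_cauchyKernel₂_smul hf hl, torusIntegral₂_cauchyKernel₂_smul hf hl', heven]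
  have : (2 * π * I : ℂ) ≠ 0 := two_pi_I_ne_zero
  simp only [smul_eq_mul]
  field_simp
  ring

theorem differentiableOn_extendV {f : ℂ × ℂ → ℂ} {r : ℝ} (hr : 0 ≤ r)
    (hf : ContinuousOn f (sphere 0 r ×ˢ sphere 0 r)) :
    DifferentiableOn ℂ (extendV f r) {z | ‖z.1‖ < r ^ 2 ∧ ‖z.2.1‖ < r ^ 2} := by
  intro z hz
  set W : Set ((ℂ × ℂ) × (ℂ × ℂ × ℂ)) := {q | (q.1.1 ^ 2 - q.2.1) * (q.1.2 ^ 2 - q.2.2.1) ≠ 0}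
  have hW : IsOpen W := isOpen_ne_fun (by fun_prop) continuous_const
  have hK : ContDiffOn ℂ 1 (fun q : (ℂ × ℂ) × (ℂ × ℂ × ℂ) => coneKernel q.1 q.2) W :=
    ContDiffOn.div (by fun_prop) (by fun_prop) fun q hq => hq
  have hsq : ∀ {w a : ℂ}, w ∈ sphere 0 r → ‖a‖ < r ^ 2 → w ^ 2 - a ≠ 0 := fun hw ha h => by
    rw [sub_eq_zero] at h
    rw [← h, norm_pow, mem_sphere_zero_iff_norm.1 hw] at ha
    exact ha.false
  have hzW : (sphere 0 r ×ˢ sphere 0 r) ×ˢ {z} ⊆ W := by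
    rintro ⟨w, _⟩ ⟨hw, rfl⟩
    exact mul_ne_zero (hsq hw.1 hz.1) (hsq hw.2 hz.2)
  have hparam := differentiableAt_integral_smul_of_contDiffOn hW hK
    (γ := fun θ : ℝ × ℝ => (circleMap 0 r θ.1, circleMap 0 r θ.2)) (by fun_prop)
    (isCompact_sphere 0 r |>.prod (isCompact_sphere 0 r))
    (fun θ => ⟨circleMap_mem_sphere 0 hr θ.1, circleMap_mem_sphere 0 hr θ.2⟩)
    (integrableOn_torusIntegral₂ hr hf) hzW
  have hT : DifferentiableAt ℂ (fun z => torusIntegral₂ (fun w => coneKernel w z • f w) r) z := by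
    unfold torusIntegral₂
    refine hparam.congr_of_eventuallyEq
      (.of_forall fun z => integral_congr_ae (.of_forall fun θ => ?_))
    simp only [smul_eq_mul]
    ring
  exact (hT.const_smul ((2 * π * I) ^ 2)⁻¹).differentiableWithinAt

theorem piMap_neg (l : ℂ × ℂ) : piMap (-l) = piMap l := by
  simp [piMap]

theorem piMap_mem_calV {l : ℂ × ℂ} (hl : l ∈ biD) : piMap l ∈ calV := by
  have h₁ : ‖l.1‖ < 1 := mem_ball_zero_iff.1 hl.1
  have h₂ : ‖l.2‖ < 1 := mem_ball_zero_iff.1 hl.2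
  refine ⟨⟨?_, ?_, ?_⟩, by simp only [piMap]; ring⟩ <;>
    simp only [uD, piMap, mem_ball_zero_iff, norm_pow, norm_mul]
  · exact pow_lt_one₀ (norm_nonneg _) h₁ two_ne_zero
  · exact pow_lt_one₀ (norm_nonneg _) h₂ two_ne_zero
  · exact mul_lt_one_of_nonneg_of_lt_one_left (norm_nonneg _) h₁ h₂.le

theorem exists_piMap_eq {z : ℂ × ℂ × ℂ} (hz : z.2.2 ^ 2 = z.1 * z.2.1) :
    ∃ l, piMap l = z := by
  obtain ⟨a, ha⟩ := IsAlgClosed.exists_pow_nat_eq z.1 two_pos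
  rcases eq_or_ne a 0 with rfl | ha₀
  · obtain ⟨b, hb⟩ := IsAlgClosed.exists_pow_nat_eq z.2.1 two_pos
    have hz₃ : z.2.2 = 0 := by simpa [← ha] using hz
    exact ⟨(0, b), by ext <;> simp [piMap, ← ha, hb, hz₃]⟩
  · refine ⟨(a, z.2.2 / a), ?_⟩
    ext
    · simp [piMap, ha]
    · simp only [piMap]
      rw [div_pow, hz, ← ha]
      field_simp
    · simp [piMap, mul_div_cancel₀ _ ha₀]

theorem exists_mem_biD_piMap_eq {z : ℂ × ℂ × ℂ} (hz : z ∈ calV) : ∃ l ∈ biD, piMap l = z := by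
  obtain ⟨l, rfl⟩ := exists_piMap_eq hz.2
  obtain ⟨⟨h₁, h₂, -⟩, -⟩ := hz
  refine ⟨l, ⟨?_, ?_⟩, rfl⟩ <;>
    rw [uD, mem_ball_zero_iff, ← pow_lt_one_iff_of_nonneg (norm_nonneg _) two_ne_zero, ← norm_pow]
  exacts [mem_ball_zero_iff.1 h₁, mem_ball_zero_iff.1 h₂]

theorem differentiable_piMap : Differentiable ℂ piMap := by
  unfold piMap
  fun_prop

theorem HoloOnV.differentiableOn_comp_piMap {Φ : ℂ × ℂ × ℂ → ℂ} (hΦ : HoloOnV Φ) :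
    DifferentiableOn ℂ (Φ ∘ piMap) biD := by
  intro l hl
  obtain ⟨U, hU, hlU, F, hF, hFΦ⟩ := hΦ (piMap l) (piMap_mem_calV hl)
  have hFπ : DifferentiableAt ℂ (F ∘ piMap) l :=
    (hF.differentiableAt (hU.mem_nhds hlU)).comp l (differentiable_piMap l)
  have hnhds : piMap ⁻¹' U ∩ biD ∈ 𝓝 l :=
    ((hU.preimage differentiable_piMap.continuous).inter (isOpen_ball.prod isOpen_ball)).mem_nhds
      ⟨hlU, hl⟩
  refine (hFπ.congr_of_eventuallyEq ?_).differentiableWithinAt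
  filter_upwards [hnhds] with x hx
  exact (hFΦ _ ⟨hx.1, piMap_mem_calV hx.2⟩).symm

theorem holoOnV_of_differentiableOn_comp_piMap_of_even {Φ : ℂ × ℂ × ℂ → ℂ}
    (hd : DifferentiableOn ℂ (Φ ∘ piMap) biD)
    (heven : ∀ p ∈ biD, (Φ ∘ piMap) (-p) = (Φ ∘ piMap) p) : HoloOnV Φ := by
  intro p hp
  have hp₁ : ‖p.1‖ < 1 := mem_ball_zero_iff.1 hp.1.1
  have hp₂ : ‖p.2.1‖ < 1 := mem_ball_zero_iff.1 hp.1.2.1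
  obtain ⟨r, hpr, hr₁⟩ :=
    exists_between ((Real.sqrt_lt' one_pos).2 (by rw [one_pow]; exact max_lt hp₁ hp₂))
  have hr : 0 ≤ r := (Real.sqrt_nonneg _).trans hpr.le
  have hball : closedBall (0 : ℂ) r ⊆ uD := closedBall_subset_ball hr₁
  refine ⟨{z | ‖z.1‖ < r ^ 2 ∧ ‖z.2.1‖ < r ^ 2}, ?_, max_lt_iff.1 (Real.lt_sq_of_sqrt_lt hpr),
    extendV (Φ ∘ piMap) r, differentiableOn_extendV hr (hd.continuousOn.mono ?_), ?_⟩
  · exact (isOpen_lt continuous_fst.norm continuous_const).inter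
      (isOpen_lt continuous_snd.fst.norm continuous_const)
  · exact prod_mono (sphere_subset_closedBall.trans hball) (sphere_subset_closedBall.trans hball)
  · rintro q ⟨hqU, hqV⟩
    obtain ⟨l, hl, rfl⟩ := exists_mem_biD_piMap_eq hqV
    have hlr : ∀ {a : ℂ}, ‖a ^ 2‖ < r ^ 2 → a ∈ ball 0 r := fun h => mem_ball_zero_iff.2 <|
      (pow_lt_pow_iff_left₀ (norm_nonneg _) hr two_ne_zero).1 (by rwa [← norm_pow])
    exact extendV_piMap (hd.mono (prod_mono hball hball)) (heven l hl) ⟨hlr hqU.1, hlr hqU.2⟩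

theorem stmt_11 (Φ : ℂ × ℂ × ℂ → ℂ) :
    (HoloOnV Φ ∧ ∀ z ∈ calV, ‖Φ z‖ ≤ 1) ↔
      (DifferentiableOn ℂ (Φ ∘ piMap) biD ∧
        (∀ p ∈ biD, (Φ ∘ piMap) (-p) = (Φ ∘ piMap) p) ∧
        ∀ p ∈ biD, ‖(Φ ∘ piMap) p‖ ≤ 1) := by
  constructor
  · rintro ⟨hΦ, hbound⟩
    exact ⟨hΦ.differentiableOn_comp_piMap, fun p _ => congrArg Φ (piMap_neg p),
      fun p hp => hbound _ (piMap_mem_calV hp)⟩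
  · rintro ⟨hd, heven, hbound⟩
    refine ⟨holoOnV_of_differentiableOn_comp_piMap_of_even hd heven, fun z hz => ?_⟩
    obtain ⟨l, hl, rfl⟩ := exists_mem_biD_piMap_eq hz
    exact hbound l hl
end
end

section
/- For every z ∈ ℂ³ there exists a unitary 4×4 complex matrix U such that for every 4×4 complex matrix T with operator norm ‖T‖ ≤ 1 one has ‖z_T‖ ≤ ‖z_U‖. In other words, the supremum of ‖z_T‖ over all contractions T on ℂ² ⊕ ℂ² is attained, and it is attained at a unitary. -/
noncomputable section

/-- The `ℓ² → ℓ²` operator norm of a complex matrix. -/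
def opNorm {m n : Type*} [Fintype m] [Fintype n] [DecidableEq n] (A : Matrix m n ℂ) : ℝ :=
  ‖LinearMap.toContinuousLinearMap (Matrix.toEuclideanLin A)‖

/-- For `z ∈ ℂ³` and a `4×4` matrix `S = [[A,B],[C,D]]` in `2×2` block form
(with respect to `ℂ⁴ = ℂ² ⊕ ℂ²`), the matrix `z_S = [[z₁A, z₃B],[z₃C, z₂D]]`. -/
def zS (z : ℂ × ℂ × ℂ) (S : Matrix (Fin 4) (Fin 4) ℂ) : Matrix (Fin 4) (Fin 4) ℂ :=
  Matrix.of fun i j =>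
    (if i.val < 2 then (if j.val < 2 then z.1 else z.2.2)
     else (if j.val < 2 then z.2.2 else z.2.1)) * S i j

/-!
A contraction `T` has a singular value decomposition `T = V D W⋆` with `D` real diagonal and
`‖D‖ = ‖T‖ ≤ 1`, and `D` is the real part of the unitary `D + i √(1 - D²)`; hence `T` is the
midpoint of two unitaries. The map `T ↦ ‖z_T‖` is the norm of a linear map, so it attains its
maximum over the compact unit ball at some `T₀`, and its value there is at most the larger of
its values at the two unitaries whose midpoint is `T₀`.
-/

lemma IsSelfAdjoint.exists_mem_unitary_eq_midpoint {A : Type*} [CStarAlgebra A] [PartialOrder A]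
    [StarOrderedRing A] {a : A} (ha : IsSelfAdjoint a) (ha_norm : ‖a‖ ≤ 1) :
    ∃ u ∈ unitary A, a = (2⁻¹ : ℝ) • (u + star u) := by
  let a' : selfAdjoint A := ⟨a, selfAdjoint.mem_iff.mpr ha⟩
  let u := selfAdjoint.unitarySelfAddISMul a' ha_norm
  refine ⟨u, u.2, ?_⟩
  rw [← realPart_apply_coe, selfAdjoint.realPart_unitarySelfAddISMul a' ha_norm]

namespace Matrix

variable {n : Type*} [Fintype n] [DecidableEq n]

section RCLike

variable {𝕜 : Type*} [RCLike 𝕜]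

lemma exists_unitary_eq_mul_diagonal_sqrt {B : Matrix n n 𝕜} {e : n → ℝ}
    (hB : Bᴴ * B = diagonal (RCLike.ofReal ∘ e)) :
    ∃ V ∈ unitaryGroup n 𝕜, B = V * diagonal (fun k => (√(e k) : 𝕜)) := by
  set b : n → EuclideanSpace 𝕜 n := fun k => WithLp.toLp 2 (B.col k)
  have inner_b : ∀ k l, inner 𝕜 (b k) (b l) = if k = l then (e k : 𝕜) else 0 := by
    intro k l
    have := congr_fun (congr_fun hB k) l
    rw [mul_apply, diagonal_apply] at this
    rw [EuclideanSpace.inner_toLp_toLp, dotProduct]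
    simpa [b, mul_comm] using this
  have sqrt_e : ∀ k, √(e k) = ‖b k‖ := fun k => by
    have := inner_b k k
    rw [if_pos rfl, inner_self_eq_norm_sq_to_K] at this
    rw [← Real.sqrt_sq (norm_nonneg (b k))]
    exact congrArg Real.sqrt (by exact_mod_cast this.symm)
  set s : Set n := {k | b k ≠ 0}
  have hu : Orthonormal 𝕜 (s.domRestrict fun k => (‖b k‖ : 𝕜)⁻¹ • b k) := by
    refine ⟨fun k => norm_smul_inv_norm k.2, fun k l hkl => ?_⟩
    simp only [Set.domRestrict_apply, inner_smul_left, inner_smul_right, inner_b,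
      if_neg (Subtype.coe_ne_coe.mpr hkl), mul_zero]
  obtain ⟨v, hv⟩ := hu.exists_orthonormalBasis_extension_of_card_eq (by simp)
  have col_eq : ∀ k, b k = (‖b k‖ : 𝕜) • v k := fun k => by
    by_cases hk : b k = 0
    · simp [hk]
    · rw [hv k hk, smul_smul, mul_inv_cancel₀ (by simpa using hk), one_smul]
  refine ⟨(EuclideanSpace.basisFun n 𝕜).toBasis.toMatrix v.toBasis,
    (EuclideanSpace.basisFun n 𝕜).toMatrix_orthonormalBasis_mem_unitary v, ?_⟩
  ext i k
  simpa [mul_diagonal, Module.Basis.toMatrix_apply, sqrt_e, b, mul_comm,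
    RCLike.real_smul_eq_coe_mul] using congrArg (· i) (col_eq k)

lemma exists_svd (A : Matrix n n 𝕜) :
    ∃ V ∈ unitaryGroup n 𝕜, ∃ W ∈ unitaryGroup n 𝕜, ∃ σ : n → ℝ,
      A = V * diagonal (RCLike.ofReal ∘ σ) * star W := by
  have hA : (Aᴴ * A).IsHermitian := isHermitian_conjTranspose_mul_self A
  set W : Matrix n n 𝕜 := (hA.eigenvectorUnitary : Matrix n n 𝕜)
  have hAW : (A * W)ᴴ * (A * W) = diagonal (RCLike.ofReal ∘ hA.eigenvalues) := by
    rw [← hA.conjStarAlgAut_star_eigenvectorUnitary, Unitary.conjStarAlgAut_star_apply,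
      conjTranspose_mul, ← star_eq_conjTranspose W, mul_assoc, mul_assoc, mul_assoc]
  obtain ⟨V, hV, hAW_eq⟩ := exists_unitary_eq_mul_diagonal_sqrt hAW
  refine ⟨V, hV, W, hA.eigenvectorUnitary.2, fun k => √(hA.eigenvalues k), ?_⟩
  calc A = A * W * star W := by simp [W, mul_assoc]
    _ = _ := by rw [hAW_eq]; rfl

end RCLike

open scoped Matrix.Norms.L2Operator MatrixOrder

lemma exists_unitary_eq_midpoint_of_norm_le_one {T : Matrix n n ℂ} (hT : ‖T‖ ≤ 1) :
    ∃ U₁ ∈ unitaryGroup n ℂ, ∃ U₂ ∈ unitaryGroup n ℂ, T = (2⁻¹ : ℝ) • (U₁ + U₂) := by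
  obtain ⟨V, hV, W, hW, σ, rfl⟩ := exists_svd T
  set D := diagonal (RCLike.ofReal ∘ σ : n → ℂ)
  have hD : IsSelfAdjoint D := by
    simp [D, IsSelfAdjoint, star_eq_conjTranspose, diagonal_conjTranspose]
  have hD_norm : ‖D‖ ≤ 1 := by
    rwa [CStarRing.norm_mul_mem_unitary _ (Unitary.star_mem hW),
      CStarRing.norm_mem_unitary_mul _ hV] at hT
  obtain ⟨u, hu, hDu⟩ := hD.exists_mem_unitary_eq_midpoint hD_norm
  refine ⟨V * u * star W, mul_mem (mul_mem hV hu) (Unitary.star_mem hW),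
    V * star u * star W, mul_mem (mul_mem hV (Unitary.star_mem hu)) (Unitary.star_mem hW), ?_⟩
  rw [hDu, mul_smul_comm, smul_mul_assoc, mul_add, add_mul]

theorem exists_unitary_forall_norm_le_one_norm_map_le {F : Type*} [SeminormedAddCommGroup F]
    [NormedSpace ℂ F] (Φ : Matrix n n ℂ →ₗ[ℂ] F) :
    ∃ U ∈ unitaryGroup n ℂ, ∀ T : Matrix n n ℂ, ‖T‖ ≤ 1 → ‖Φ T‖ ≤ ‖Φ U‖ := by
  obtain ⟨T₀, hT₀, hT₀_max⟩ := (isCompact_closedBall (0 : Matrix n n ℂ) 1).exists_isMaxOn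
    (Metric.nonempty_closedBall.mpr zero_le_one)
    (continuous_norm.comp Φ.continuous_of_finiteDimensional).continuousOn
  have le_T₀ : ∀ T : Matrix n n ℂ, ‖T‖ ≤ 1 → ‖Φ T‖ ≤ ‖Φ T₀‖ := fun T hT =>
    hT₀_max (mem_closedBall_zero_iff.mpr hT)
  obtain ⟨U₁, hU₁, U₂, hU₂, rfl⟩ :=
    exists_unitary_eq_midpoint_of_norm_le_one (mem_closedBall_zero_iff.mp hT₀)
  have le_max : ‖Φ ((2⁻¹ : ℝ) • (U₁ + U₂))‖ ≤ max ‖Φ U₁‖ ‖Φ U₂‖ := by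
    rw [LinearMap.map_smul_of_tower, map_add, norm_smul, Real.norm_of_nonneg (by norm_num)]
    linarith [norm_add_le (Φ U₁) (Φ U₂), le_max_left ‖Φ U₁‖ ‖Φ U₂‖,
      le_max_right ‖Φ U₁‖ ‖Φ U₂‖]
  rcases le_total ‖Φ U₁‖ ‖Φ U₂‖ with h | h
  · exact ⟨U₂, hU₂, fun T hT => (le_T₀ T hT).trans (le_max.trans_eq (max_eq_right h))⟩
  · exact ⟨U₁, hU₁, fun T hT => (le_T₀ T hT).trans (le_max.trans_eq (max_eq_left h))⟩

end Matrix

def zSLinearMap (z : ℂ × ℂ × ℂ) : Matrix (Fin 4) (Fin 4) ℂ →ₗ[ℂ] Matrix (Fin 4) (Fin 4) ℂ where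
  toFun := zS z
  map_add' S T := by
    ext i j
    simp only [zS, Matrix.of_apply, Matrix.add_apply, mul_add]
  map_smul' c S := by
    ext i j
    simp only [zS, Matrix.of_apply, Matrix.smul_apply, smul_eq_mul, RingHom.id_apply]
    ring

theorem stmt_12 (z : ℂ × ℂ × ℂ) :
    ∃ U : Matrix (Fin 4) (Fin 4) ℂ, U ∈ Matrix.unitaryGroup (Fin 4) ℂ ∧
      ∀ T : Matrix (Fin 4) (Fin 4) ℂ, opNorm T ≤ 1 → opNorm (zS z T) ≤ opNorm (zS z U) := by
  -- `opNorm` is definitionally the norm of `Matrix.Norms.L2Operator`.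
  open scoped Matrix.Norms.L2Operator in
  exact Matrix.exists_unitary_forall_norm_le_one_norm_map_le (zSLinearMap z)
end
end

section
/- A 4×4 complex matrix written in 2×2 block form [[A, B], [C, D]] is unitary if and only if there exist unitary 2×2 matrices u, v, w and 2×2 matrices a, b, c, d such that a, b, c are positive semidefinite (Hermitian), the block matrix [[a, b], [c, d]] is unitary, and [[A, B], [C, D]] = [[u, 0], [0, v]] · [[a, b], [c, d]] · [[1, 0], [0, w]]. -/
/-!
Every square complex matrix `M` has a polar decomposition: a unitary `W` with `W⋆ M ⪰ 0`.
For invertible `M` take `W = M P⁻¹` with `P = √(M⋆ M)`; in general, the matrices admitting one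
form a closed set (the unitary group is compact and the positive semidefinite cone is closed)
containing the dense set of invertible matrices.

For a unitary `[[A, B], [C, D]]` choose unitaries `u, v` with `u⋆ A, v⋆ C ⪰ 0`, then `ω` with
`u⋆ B ω ⪰ 0`. The middle factor `[[u⋆ A, u⋆ B ω], [v⋆ C, v⋆ D ω]] = diag(u, v)⋆ [[A, B], [C, D]]
diag(1, ω)` is a product of unitaries, and `w = ω⋆`.
-/

open scoped ComplexOrder

open Filter Topology

namespace Matrix

section Unitary

variable {m n α : Type*} [Fintype m] [DecidableEq m] [Fintype n] [DecidableEq n]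
  [CommRing α] [StarRing α]

lemma fromBlocks_mem_unitaryGroup {u : Matrix m m α} {v : Matrix n n α}
    (hu : u ∈ unitaryGroup m α) (hv : v ∈ unitaryGroup n α) :
    fromBlocks u 0 0 v ∈ unitaryGroup (m ⊕ n) α := by
  rw [mem_unitaryGroup_iff', star_eq_conjTranspose, fromBlocks_conjTranspose,
    fromBlocks_multiply, ← fromBlocks_one]
  rw [mem_unitaryGroup_iff', star_eq_conjTranspose] at hu hv
  simp [hu, hv]

end Unitary

variable {n : Type*} [Fintype n] [DecidableEq n]

open scoped Matrix.Norms.L2Operator MatrixOrder in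
lemma isClosed_setOf_posSemidef : IsClosed {M : Matrix n n ℂ | M.PosSemidef} := by
  simpa only [nonneg_iff_posSemidef] using CStarAlgebra.isClosed_nonneg (A := Matrix n n ℂ)

open scoped Matrix.Norms.L2Operator in
lemma isCompact_unitaryGroup : IsCompact (unitaryGroup n ℂ : Set (Matrix n n ℂ)) := by
  refine Metric.isCompact_of_isClosed_isBounded isClosed_unitary
    ((Metric.isBounded_closedBall (x := 0) (r := ‖(1 : Matrix n n ℂ)‖)).subset fun U hU => ?_)
  simpa using (CStarRing.norm_mem_unitary_mul (1 : Matrix n n ℂ) hU).le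

lemma dense_setOf_isUnit : Dense {M : Matrix n n ℂ | IsUnit M} := by
  intro M
  have hlim : Tendsto (fun t : ℂ => algebraMap ℂ _ t + M) (𝓝[≠] 0) (𝓝 M) := by
    refine Continuous.tendsto' ?_ 0 M (by simp) |>.mono_left nhdsWithin_le_nhds
    simp only [Algebra.algebraMap_eq_smul_one]
    fun_prop
  refine mem_closure_of_tendsto hlim ?_
  filter_upwards [(finite_spectrum (-M)).eventually_cofinite_notMem.filter_mono
    (nhdsNE_le_cofinite 0)] with t ht
  simpa using spectrum.notMem_iff.mp ht

open scoped MatrixOrder in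
lemma exists_mem_unitaryGroup_star_mul_posSemidef_of_isUnit {M : Matrix n n ℂ} (hM : IsUnit M) :
    ∃ W ∈ unitaryGroup n ℂ, (star W * M).PosSemidef := by
  set P := CFC.sqrt (star M * M)
  have hP : P.PosSemidef := nonneg_iff_posSemidef.mp (CFC.sqrt_nonneg _)
  have hMM : 0 ≤ star M * M := (posSemidef_conjTranspose_mul_self M).nonneg
  have hPP : P * P = star M * M := CFC.sqrt_mul_sqrt_self _ hMM
  have hP_det : IsUnit P.det :=
    (isUnit_iff_isUnit_det P).mp ((CFC.isUnit_sqrt_iff _ hMM).mpr (hM.star.mul hM))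
  have hWM : star (M * P⁻¹) * M = P := by
    rw [star_mul, star_eq_conjTranspose P⁻¹, conjTranspose_nonsing_inv, hP.1, Matrix.mul_assoc,
      ← hPP, ← Matrix.mul_assoc, nonsing_inv_mul _ hP_det, Matrix.one_mul]
  refine ⟨M * P⁻¹, ?_, hWM.symm ▸ hP⟩
  rw [mem_unitaryGroup_iff', ← Matrix.mul_assoc, hWM, mul_nonsing_inv _ hP_det]

lemma isClosed_setOf_exists_mem_unitaryGroup_star_mul_posSemidef :
    IsClosed {M : Matrix n n ℂ | ∃ W ∈ unitaryGroup n ℂ, (star W * M).PosSemidef} := by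
  have : CompactSpace (unitaryGroup n ℂ) := isCompact_iff_compactSpace.mp isCompact_unitaryGroup
  have hgraph : IsClosed
      {p : unitaryGroup n ℂ × Matrix n n ℂ | (star (p.1 : Matrix n n ℂ) * p.2).PosSemidef} :=
    isClosed_setOf_posSemidef.preimage (by fun_prop)
  convert isClosedMap_snd_of_compactSpace _ hgraph using 1
  ext M
  simp

theorem exists_mem_unitaryGroup_star_mul_posSemidef (M : Matrix n n ℂ) :
    ∃ W ∈ unitaryGroup n ℂ, (star W * M).PosSemidef := by
  have hdense := (dense_setOf_isUnit (n := n)).mono fun _ hM =>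
    exists_mem_unitaryGroup_star_mul_posSemidef_of_isUnit hM
  exact isClosed_setOf_exists_mem_unitaryGroup_star_mul_posSemidef.closure_subset (hdense M)

theorem exists_mem_unitaryGroup_mul_posSemidef (M : Matrix n n ℂ) :
    ∃ W ∈ unitaryGroup n ℂ, (M * W).PosSemidef := by
  obtain ⟨W, hW, hP⟩ := exists_mem_unitaryGroup_star_mul_posSemidef Mᴴ
  refine ⟨W, hW, ?_⟩
  simpa [star_eq_conjTranspose, conjTranspose_mul] using hP.conjTranspose

end Matrix

open Matrix in
theorem stmt_13 (A B C D : Matrix (Fin 2) (Fin 2) ℂ) :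
    Matrix.fromBlocks A B C D ∈ Matrix.unitaryGroup (Fin 2 ⊕ Fin 2) ℂ ↔
      ∃ u v w a b c d : Matrix (Fin 2) (Fin 2) ℂ,
        u ∈ Matrix.unitaryGroup (Fin 2) ℂ ∧
        v ∈ Matrix.unitaryGroup (Fin 2) ℂ ∧
        w ∈ Matrix.unitaryGroup (Fin 2) ℂ ∧
        a.PosSemidef ∧ b.PosSemidef ∧ c.PosSemidef ∧
        Matrix.fromBlocks a b c d ∈ Matrix.unitaryGroup (Fin 2 ⊕ Fin 2) ℂ ∧
        Matrix.fromBlocks A B C D =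
          Matrix.fromBlocks u 0 0 v * Matrix.fromBlocks a b c d * Matrix.fromBlocks 1 0 0 w := by
  constructor
  · intro hM
    obtain ⟨u, hu, ha⟩ := exists_mem_unitaryGroup_star_mul_posSemidef A
    obtain ⟨v, hv, hc⟩ := exists_mem_unitaryGroup_star_mul_posSemidef C
    obtain ⟨ω, hω, hb⟩ := exists_mem_unitaryGroup_mul_posSemidef (star u * B)
    have hU := fromBlocks_mem_unitaryGroup hu hv
    have hV := fromBlocks_mem_unitaryGroup (one_mem (unitaryGroup (Fin 2) ℂ)) (Unitary.star_mem hω)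
    have hX : fromBlocks (star u * A) (star u * B * ω) (star v * C) (star v * D * ω) =
        star (fromBlocks u 0 0 v) * fromBlocks A B C D * star (fromBlocks 1 0 0 (star ω)) := by
      simp [star_eq_conjTranspose, fromBlocks_conjTranspose, fromBlocks_multiply]
    refine ⟨u, v, star ω, _, _, _, star v * D * ω, hu, hv, Unitary.star_mem hω, ha, hb, hc, ?_, ?_⟩
    · rw [hX]
      exact mul_mem (mul_mem (Unitary.star_mem hU) hM) (Unitary.star_mem hV)
    · rw [hX, ← Matrix.mul_assoc, ← Matrix.mul_assoc, Unitary.mul_star_self_of_mem hU,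
        Matrix.one_mul, Matrix.mul_assoc, Unitary.star_mul_self_of_mem hV, Matrix.mul_one]
  · rintro ⟨u, v, w, a, b, c, d, hu, hv, hw, -, -, -, hX, heq⟩
    rw [heq]
    exact mul_mem (mul_mem (fromBlocks_mem_unitaryGroup hu hv) hX)
      (fromBlocks_mem_unitaryGroup (one_mem (unitaryGroup (Fin 2) ℂ)) hw)
end

section
/- Let z ∈ ℂ³ with |z₁| < 1, |z₂| < 1, |z₃| < 1, and for r ∈ [0,1] let z_r be the 2×2 matrix [[r·z₁, √(1−r²)·z₃], [√(1−r²)·z₃, −r·z₂]]. Then sup_{r∈[0,1]} ‖z_r‖ < 1 if and only if |z₁z₂ − z₃²| < (1 − |z₃|²) + √(1 − |z₁|²)·√(1 − |z₂|²), where ‖·‖ denotes the operator norm on ℂ². -/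
noncomputable section

/-- For `z ∈ ℂ³` and `r ∈ [0,1]`, the matrix
`z_r = [[r z₁, √(1-r²) z₃], [√(1-r²) z₃, -r z₂]]`. -/
def zr (z : ℂ × ℂ × ℂ) (r : ℝ) : Matrix (Fin 2) (Fin 2) ℂ :=
  Matrix.of
    ![![(r : ℂ) * z.1, (Real.sqrt (1 - r ^ 2) : ℂ) * z.2.2],
      ![(Real.sqrt (1 - r ^ 2) : ℂ) * z.2.2, -((r : ℂ) * z.2.1)]]

/-!
A 2×2 matrix `M` has `‖M‖ < 1` iff `1 - Mᴴ M` is positive definite, i.e. iff its `(0,0)` entry and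
its determinant are positive. For `M = z_r` the `(0,0)` entry `1 - r²|z₁|² - (1-r²)|z₃|²` is
always positive, and the determinant is the quadratic `D²t² + (P - C² - D²)t + C²` in `t = r²`,
where `D = |z₁z₂ - z₃²|`, `C = 1 - |z₃|²` and `P = (1-|z₁|²)(1-|z₂|²)`. As `r ↦ ‖z_r‖` is
continuous on `[0,1]`, the supremum is `< 1` iff this quadratic is positive on `[0,1]`, and writing
it as `(C - Dt)² + t(P - (D - C)²)` shows that this happens iff `D < C + √P`.
-/

open ComplexConjugate

theorem ContinuousLinearMap.opNorm_lt_iff_of_finiteDimensional {𝕜 E F : Type*} [RCLike 𝕜]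
    [NormedAddCommGroup E] [NormedSpace 𝕜 E] [FiniteDimensional 𝕜 E]
    [NormedAddCommGroup F] [NormedSpace 𝕜 F] (f : E →L[𝕜] F) {c : ℝ} (hc : 0 < c) :
    ‖f‖ < c ↔ ∀ x ≠ 0, ‖f x‖ < c * ‖x‖ := by
  refine ⟨fun h x hx => (f.le_opNorm x).trans_lt (by gcongr), fun h => ?_⟩
  cases subsingleton_or_nontrivial E
  · simpa [Subsingleton.elim f 0] using hc
  have : ProperSpace E := FiniteDimensional.proper 𝕜 E
  let _ : NormedSpace ℝ E := NormedSpace.restrictScalars ℝ 𝕜 E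
  rw [← f.sSup_sphere_eq_norm, (isCompact_sphere 0 1).sSup_lt_iff_of_continuous
    (NormedSpace.sphere_nonempty.2 zero_le_one) (by fun_prop)]
  intro x hx
  rw [mem_sphere_zero_iff_norm] at hx
  simpa [hx] using h x (ne_zero_of_norm_ne_zero (by simp [hx]))

open scoped Matrix.Norms.L2Operator in
theorem continuous_opNorm {m n : Type*} [Fintype m] [Fintype n] [DecidableEq n] :
    Continuous (opNorm : Matrix m n ℂ → ℝ) :=
  continuous_norm

theorem continuous_zr (z : ℂ × ℂ × ℂ) : Continuous (zr z) := by
  refine continuous_matrix fun i j => ?_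
  fin_cases i <;> fin_cases j <;> simp [zr] <;> fun_prop

theorem norm_sq_sub_norm_toEuclideanLin_fin_two_sq (a b c d : ℂ) (x : EuclideanSpace ℂ (Fin 2)) :
    ‖x‖ ^ 2 - ‖Matrix.toEuclideanLin !![a, b; c, d] x‖ ^ 2 =
      (1 - ‖a‖ ^ 2 - ‖c‖ ^ 2) * ‖x 0‖ ^ 2 + (1 - ‖b‖ ^ 2 - ‖d‖ ^ 2) * ‖x 1‖ ^ 2
        - 2 * ((conj a * b + conj c * d) * conj (x 0) * x 1).re := by
  simp only [EuclideanSpace.norm_sq_eq, Fin.sum_univ_two, Matrix.toLpLin_apply, Complex.sq_norm,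
    Complex.normSq_apply, Matrix.mulVec, dotProduct, Matrix.of_apply, Matrix.cons_val',
    Matrix.cons_val_fin_one, Matrix.cons_val_zero, Matrix.cons_val_one, Complex.add_re,
    Complex.mul_re, Complex.add_im, Complex.mul_im, Complex.conj_re, Complex.conj_im]
  ring

theorem hermitianForm_fin_two_pos_iff (α δ : ℝ) (γ : ℂ) (hα : 0 < α) :
    (∀ x : EuclideanSpace ℂ (Fin 2), x ≠ 0 →
        0 < α * ‖x 0‖ ^ 2 + δ * ‖x 1‖ ^ 2 - 2 * (γ * conj (x 0) * x 1).re) ↔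
      ‖γ‖ ^ 2 < α * δ := by
  constructor
  · intro h
    have hx : !₂[γ, (α : ℂ)] ≠ 0 := fun h0 => by
      simpa [hα.ne'] using congrArg (· 1) h0
    have := h _ hx
    simp only [Complex.sq_norm, Complex.normSq_apply, Matrix.cons_val_zero, Matrix.cons_val_one,
      Matrix.cons_val_fin_one, Complex.mul_re, Complex.mul_im, Complex.conj_re, Complex.conj_im,
      Complex.ofReal_re, Complex.ofReal_im] at this ⊢
    nlinarith
  · intro h x hx
    have hsq : α * (α * ‖x 0‖ ^ 2 + δ * ‖x 1‖ ^ 2 - 2 * (γ * conj (x 0) * x 1).re) =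
        ‖α * x 0 - γ * x 1‖ ^ 2 + (α * δ - ‖γ‖ ^ 2) * ‖x 1‖ ^ 2 := by
      simp only [Complex.sq_norm, Complex.normSq_apply, Complex.mul_re, Complex.mul_im,
        Complex.sub_re, Complex.sub_im, Complex.conj_re, Complex.conj_im, Complex.ofReal_re,
        Complex.ofReal_im]
      ring
    refine pos_of_mul_pos_right (hsq ▸ ?_) hα.le
    rcases eq_or_ne (x 1) 0 with h1 | h1
    · have h0 : x 0 ≠ 0 := fun h0 => hx (by ext i; fin_cases i <;> simp [h0, h1])
      simpa [h1] using pow_pos (mul_pos (abs_pos.2 hα.ne') (norm_pos_iff.2 h0)) 2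
    · exact add_pos_of_nonneg_of_pos (by positivity)
        (mul_pos (sub_pos.2 h) (pow_pos (norm_pos_iff.2 h1) 2))

theorem opNorm_fin_two_lt_one_iff (a b c d : ℂ) (h : ‖a‖ ^ 2 + ‖c‖ ^ 2 < 1) :
    opNorm !![a, b; c, d] < 1 ↔
      ‖conj a * b + conj c * d‖ ^ 2 < (1 - ‖a‖ ^ 2 - ‖c‖ ^ 2) * (1 - ‖b‖ ^ 2 - ‖d‖ ^ 2) := by
  rw [opNorm, ContinuousLinearMap.opNorm_lt_iff_of_finiteDimensional _ one_pos,
    ← hermitianForm_fin_two_pos_iff _ _ _ (by linarith)]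
  refine forall₂_congr fun x _ => ?_
  rw [← norm_sq_sub_norm_toEuclideanLin_fin_two_sq, sub_pos, one_mul,
    pow_lt_pow_iff_left₀ (norm_nonneg _) (norm_nonneg _) two_ne_zero]
  rfl

/-- With `t = r ^ 2`, the left side is the determinant of `1 - (zr z r)ᴴ * zr z r`. -/
theorem zr_defect_det_eq (a b c : ℂ) (t : ℝ) :
    (1 - t * ‖a‖ ^ 2 - (1 - t) * ‖c‖ ^ 2) * (1 - (1 - t) * ‖c‖ ^ 2 - t * ‖b‖ ^ 2)
        - t * (1 - t) * ‖conj a * c - conj c * b‖ ^ 2 =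
      ‖a * b - c ^ 2‖ ^ 2 * t ^ 2
        + ((1 - ‖a‖ ^ 2) * (1 - ‖b‖ ^ 2) - (1 - ‖c‖ ^ 2) ^ 2 - ‖a * b - c ^ 2‖ ^ 2) * t
        + (1 - ‖c‖ ^ 2) ^ 2 := by
  simp only [Complex.sq_norm, Complex.normSq_apply]
  simp only [Complex.sub_re, Complex.sub_im, Complex.mul_re, Complex.mul_im, Complex.conj_re,
    Complex.conj_im, pow_two]
  ring

theorem opNorm_zr_lt_one_iff (z : ℂ × ℂ × ℂ) (h₁ : ‖z.1‖ < 1) (h₃ : ‖z.2.2‖ < 1) {r : ℝ}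
    (hr : r ∈ Set.Icc (0 : ℝ) 1) :
    opNorm (zr z r) < 1 ↔
      0 < ‖z.1 * z.2.1 - z.2.2 ^ 2‖ ^ 2 * (r ^ 2) ^ 2
        + ((1 - ‖z.1‖ ^ 2) * (1 - ‖z.2.1‖ ^ 2) - (1 - ‖z.2.2‖ ^ 2) ^ 2
          - ‖z.1 * z.2.1 - z.2.2 ^ 2‖ ^ 2) * r ^ 2
        + (1 - ‖z.2.2‖ ^ 2) ^ 2 := by
  obtain ⟨a, b, c⟩ := z
  obtain ⟨hr0, hr1⟩ := hr
  have hs : Real.sqrt (1 - r ^ 2) ^ 2 = 1 - r ^ 2 := Real.sq_sqrt (by nlinarith)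
  have hra : ‖(r : ℂ) * a‖ ^ 2 = r ^ 2 * ‖a‖ ^ 2 := by simp [mul_pow]
  have hrb : ‖-((r : ℂ) * b)‖ ^ 2 = r ^ 2 * ‖b‖ ^ 2 := by simp [mul_pow]
  have hsc : ‖(Real.sqrt (1 - r ^ 2) : ℂ) * c‖ ^ 2 = (1 - r ^ 2) * ‖c‖ ^ 2 := by
    simp [mul_pow, hs]
  have hγ : ‖conj ((r : ℂ) * a) * ((Real.sqrt (1 - r ^ 2) : ℂ) * c)
      + conj ((Real.sqrt (1 - r ^ 2) : ℂ) * c) * -((r : ℂ) * b)‖ ^ 2 =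
      r ^ 2 * (1 - r ^ 2) * ‖conj a * c - conj c * b‖ ^ 2 := by
    have : conj ((r : ℂ) * a) * ((Real.sqrt (1 - r ^ 2) : ℂ) * c)
        + conj ((Real.sqrt (1 - r ^ 2) : ℂ) * c) * -((r : ℂ) * b) =
        ((r * Real.sqrt (1 - r ^ 2) : ℝ) : ℂ) * (conj a * c - conj c * b) := by
      simp only [map_mul, Complex.conj_ofReal, Complex.ofReal_mul]
      ring
    rw [this, norm_mul, mul_pow, Complex.norm_real, Real.norm_eq_abs, sq_abs, mul_pow, hs]
  have hα : ‖(r : ℂ) * a‖ ^ 2 + ‖(Real.sqrt (1 - r ^ 2) : ℂ) * c‖ ^ 2 < 1 := by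
    have ha : ‖a‖ ^ 2 < 1 := by nlinarith [norm_nonneg a]
    have hc : ‖c‖ ^ 2 < 1 := by nlinarith [norm_nonneg c]
    rw [hra, hsc]
    nlinarith [mul_nonneg (sq_nonneg r) (sub_nonneg.2 ha.le)]
  rw [zr, opNorm_fin_two_lt_one_iff _ _ _ _ hα, hra, hrb, hsc, hγ, ← sub_pos,
    zr_defect_det_eq]

theorem forall_mem_Icc_quadratic_pos_iff {P C D : ℝ} (hP : 0 < P) (hC : 0 < C) (hD : 0 ≤ D) :
    (∀ t ∈ Set.Icc (0 : ℝ) 1, 0 < D ^ 2 * t ^ 2 + (P - C ^ 2 - D ^ 2) * t + C ^ 2) ↔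
      D < C + Real.sqrt P := by
  have hq (t : ℝ) : D ^ 2 * t ^ 2 + (P - C ^ 2 - D ^ 2) * t + C ^ 2 =
      (C - D * t) ^ 2 + t * (P - (D - C) ^ 2) := by ring
  have hsqrt : Real.sqrt P ^ 2 = P := Real.sq_sqrt hP.le
  have hsqrt_pos : 0 < Real.sqrt P := Real.sqrt_pos.2 hP
  constructor
  · intro h
    by_contra! hle
    have hDpos : 0 < D := by linarith
    have hroot := h (C / D) ⟨by positivity, (div_le_one hDpos).2 (by linarith)⟩
    rw [hq, mul_div_cancel₀ _ hDpos.ne', sub_self, sq, zero_mul, zero_add] at hroot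
    have : P ≤ (D - C) ^ 2 := hsqrt ▸ pow_le_pow_left₀ hsqrt_pos.le (by linarith) 2
    nlinarith [div_pos hC hDpos]
  · rintro h t ⟨ht0, ht1⟩
    rw [hq]
    rcases lt_or_ge ((D - C) ^ 2) P with hlt | hge
    · rcases ht0.eq_or_lt with rfl | htpos
      · simpa using pow_pos hC 2
      · exact add_pos_of_nonneg_of_pos (sq_nonneg _) (mul_pos htpos (sub_pos.2 hlt))
    · -- `D - C < √P ≤ |D - C|` forces `D - C ≤ -√P`, so `C - D * t ≥ C - D > 0`
      have hDC : D - C ≤ -Real.sqrt P := by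
        by_contra! h'
        nlinarith [mul_pos (by linarith : 0 < Real.sqrt P - (D - C))
          (by linarith : 0 < Real.sqrt P + (D - C))]
      have hsq : (D - C) ^ 2 ≤ (C - D * t) ^ 2 := by
        rw [← neg_sub, neg_sq]
        exact pow_le_pow_left₀ (by linarith) (by nlinarith) 2
      nlinarith [mul_nonneg (sub_nonneg.2 ht1) (sub_nonneg.2 hge)]

theorem stmt_14 (z : ℂ × ℂ × ℂ) (h₁ : ‖z.1‖ < 1) (h₂ : ‖z.2.1‖ < 1) (h₃ : ‖z.2.2‖ < 1) :
    sSup ((fun r => opNorm (zr z r)) '' Set.Icc (0 : ℝ) 1) < 1 ↔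
      ‖z.1 * z.2.1 - z.2.2 ^ 2‖ <
        (1 - ‖z.2.2‖ ^ 2) + Real.sqrt (1 - ‖z.1‖ ^ 2) * Real.sqrt (1 - ‖z.2.1‖ ^ 2) := by
  have hA : 0 < 1 - ‖z.1‖ ^ 2 := by nlinarith [norm_nonneg z.1]
  have hB : 0 < 1 - ‖z.2.1‖ ^ 2 := by nlinarith [norm_nonneg z.2.1]
  have hC : 0 < 1 - ‖z.2.2‖ ^ 2 := by nlinarith [norm_nonneg z.2.2]
  rw [isCompact_Icc.sSup_lt_iff_of_continuous (f := fun r => opNorm (zr z r))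
      (Set.nonempty_Icc.2 zero_le_one)
      (continuous_opNorm.comp (continuous_zr z)).continuousOn, ← Real.sqrt_mul hA.le,
    ← forall_mem_Icc_quadratic_pos_iff (mul_pos hA hB) hC (norm_nonneg _)]
  constructor
  · intro h t ht
    have hr : Real.sqrt t ∈ Set.Icc (0 : ℝ) 1 := ⟨Real.sqrt_nonneg t, Real.sqrt_le_one.2 ht.2⟩
    simpa [Real.sq_sqrt ht.1] using (opNorm_zr_lt_one_iff z h₁ h₃ hr).1 (h _ hr)
  · intro h r hr
    exact (opNorm_zr_lt_one_iff z h₁ h₃ hr).2 (h _ ⟨sq_nonneg r, pow_le_one₀ hr.1 hr.2⟩)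
end
end

section
/- The set 𝒢 = {z ∈ ℂ³ : |z₁| < 1, |z₂| < 1, |z₃| < 1, and |z₁z₂ − z₃²| < (1 − |z₃|²) + √(1 − |z₁|²)·√(1 − |z₂|²)} is a convex subset of ℂ³ (viewed as a real vector space). -/
open Metric

noncomputable section

/-- The domain `𝒢 = {z ∈ 𝔻³ : |z₁z₂ - z₃²| < (1-|z₃|²) + √(1-|z₁|²)√(1-|z₂|²)}`. -/
def calG : Set (ℂ × ℂ × ℂ) :=
  {z | z ∈ triD ∧
    ‖z.1 * z.2.1 - z.2.2 ^ 2‖ <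
      (1 - ‖z.2.2‖ ^ 2) + Real.sqrt (1 - ‖z.1‖ ^ 2) * Real.sqrt (1 - ‖z.2.1‖ ^ 2)}

/-
For `‖ρ‖ = 1` write `a = ρ z₁`, `b = ρ z₂`, `c = ρ z₃`. Then
`Re (ρ² (z₁ z₂ - z₃²)) + ‖z₃‖² = Re (a b) + 2 (Im c)²`, and `‖v‖` is the maximum of `Re (ρ² v)`
over `‖ρ‖ = 1`, so `𝒢` is the intersection over `ρ` of the sublevel sets `{rotatedForm ρ < 1}`
of `𝔻³`. Each of them is convex because `(a, b) ↦ Re (a b) - √(1 - ‖a‖²) √(1 - ‖b‖²)` is convex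
on `𝔻²`: lifting `a` to `â = (Re a, Im a, √(1 - ‖a‖²))` on the unit sphere, the function is
`⟪â, J b̂⟫` with `J = diag (1, -1, -1)`, and at every point `(c, d)` it lies above its tangent
plane, the gap being `‖τ (â - ĉ) + σ J (b̂ - d̂)‖² / (2 σ τ)` with `σ = ĉ₃`, `τ = d̂₃`.
-/

open ComplexConjugate RealInnerProductSpace Set

theorem convexOn_of_forall_exists_subgradient {𝕜 E : Type*} [Field 𝕜] [LinearOrder 𝕜]
    [IsStrictOrderedRing 𝕜] [AddCommGroup E] [Module 𝕜 E] {s : Set E} {f : E → 𝕜}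
    (hs : Convex 𝕜 s) (h : ∀ x ∈ s, ∃ g : E →ₗ[𝕜] 𝕜, ∀ y ∈ s, f x + g (y - x) ≤ f y) :
    ConvexOn 𝕜 s f := by
  refine ⟨hs, fun x hx y hy a b ha hb hab => ?_⟩
  set m := a • x + b • y
  obtain ⟨g, hg⟩ := h m (hs hx hy ha hb hab)
  have hsum : a * g (x - m) + b * g (y - m) = 0 := by
    rw [← smul_eq_mul, ← smul_eq_mul, ← map_smul, ← map_smul, ← map_add, smul_sub, smul_sub,
      sub_add_sub_comm, ← add_smul, hab, one_smul, sub_self, map_zero]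
  have hx' := mul_le_mul_of_nonneg_left (hg x hx) ha
  have hy' := mul_le_mul_of_nonneg_left (hg y hy) hb
  simp only [smul_eq_mul]
  linear_combination hx' + hy' - f m * hab - hsum

theorem affine_le_of_mem_hemisphere {a₁ a₂ s b₁ b₂ t c₁ c₂ σ d₁ d₂ τ : ℝ}
    (ha : a₁ ^ 2 + a₂ ^ 2 + s ^ 2 = 1) (hb : b₁ ^ 2 + b₂ ^ 2 + t ^ 2 = 1)
    (hc : c₁ ^ 2 + c₂ ^ 2 + σ ^ 2 = 1) (hd : d₁ ^ 2 + d₂ ^ 2 + τ ^ 2 = 1)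
    (hσ : 0 < σ) (hτ : 0 < τ) :
    c₁ * d₁ - c₂ * d₂ - σ * τ
      + ((d₁ + τ / σ * c₁) * (a₁ - c₁) + (-d₂ + τ / σ * c₂) * (a₂ - c₂))
      + ((c₁ + σ / τ * d₁) * (b₁ - d₁) + (-c₂ + σ / τ * d₂) * (b₂ - d₂))
      ≤ a₁ * b₁ - a₂ * b₂ - s * t := by
  rw [← sub_nonneg, ← mul_nonneg_iff_of_pos_left (mul_pos hσ hτ)]
  have key : σ * τ * (a₁ * b₁ - a₂ * b₂ - s * t - (c₁ * d₁ - c₂ * d₂ - σ * τ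
      + ((d₁ + τ / σ * c₁) * (a₁ - c₁) + (-d₂ + τ / σ * c₂) * (a₂ - c₂))
      + ((c₁ + σ / τ * d₁) * (b₁ - d₁) + (-c₂ + σ / τ * d₂) * (b₂ - d₂))))
      = ((τ * (a₁ - c₁) + σ * (b₁ - d₁)) ^ 2 + (τ * (a₂ - c₂) - σ * (b₂ - d₂)) ^ 2
        + (τ * (s - σ) - σ * (t - τ)) ^ 2) / 2 := by
    field_simp
    linear_combination (-τ ^ 2) * ha + (-σ ^ 2) * hb + (d₁ ^ 2 + d₂ ^ 2 + 2 * τ ^ 2 - 1) * hc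
      + (1 - c₁ ^ 2 - c₂ ^ 2) * hd
  rw [key]; positivity

def discHeight (a : ℂ) : ℝ := √(1 - ‖a‖ ^ 2)

def liftPairing (a b : ℂ) : ℝ := (a * b).re - discHeight a * discHeight b

theorem re_sq_add_im_sq_add_discHeight_sq {a : ℂ} (ha : ‖a‖ ≤ 1) :
    a.re ^ 2 + a.im ^ 2 + discHeight a ^ 2 = 1 := by
  rw [discHeight, Real.sq_sqrt (by nlinarith [norm_nonneg a]), Complex.sq_norm,
    Complex.normSq_apply]
  ring

theorem discHeight_pos {a : ℂ} (ha : ‖a‖ < 1) : 0 < discHeight a :=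
  Real.sqrt_pos.2 (by nlinarith [norm_nonneg a])

theorem liftPairing_add_inner_le {a b c d : ℂ} (ha : ‖a‖ ≤ 1) (hb : ‖b‖ ≤ 1) (hc : ‖c‖ < 1)
    (hd : ‖d‖ < 1) :
    liftPairing c d + ⟪conj d + (discHeight d / discHeight c : ℝ) * c, a - c⟫
      + ⟪conj c + (discHeight c / discHeight d : ℝ) * d, b - d⟫ ≤ liftPairing a b := by
  have := affine_le_of_mem_hemisphere (re_sq_add_im_sq_add_discHeight_sq ha)
    (re_sq_add_im_sq_add_discHeight_sq hb) (re_sq_add_im_sq_add_discHeight_sq hc.le)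
    (re_sq_add_im_sq_add_discHeight_sq hd.le) (discHeight_pos hc) (discHeight_pos hd)
  simp only [liftPairing, Complex.inner, Complex.mul_re, Complex.mul_im, Complex.add_re,
    Complex.add_im, Complex.sub_re, Complex.sub_im, Complex.conj_re, Complex.conj_im,
    Complex.ofReal_re, Complex.ofReal_im, map_add, map_mul, Complex.conj_ofReal, Complex.conj_conj]
  linarith

theorem convexOn_liftPairing :
    ConvexOn ℝ (ball (0 : ℂ) 1 ×ˢ ball 0 1) fun p => liftPairing p.1 p.2 := by
  refine convexOn_of_forall_exists_subgradient ((convex_ball 0 1).prod (convex_ball 0 1)) ?_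
  rintro ⟨c, d⟩ ⟨hc, hd⟩
  rw [mem_ball_zero_iff] at hc hd
  refine ⟨innerₛₗ ℝ (conj d + (discHeight d / discHeight c : ℝ) * c) ∘ₗ LinearMap.fst ℝ ℂ ℂ
    + innerₛₗ ℝ (conj c + (discHeight c / discHeight d : ℝ) * d) ∘ₗ LinearMap.snd ℝ ℂ ℂ, ?_⟩
  rintro ⟨a, b⟩ ⟨ha, hb⟩
  rw [mem_ball_zero_iff] at ha hb
  simpa only [LinearMap.add_apply, LinearMap.comp_apply, innerₛₗ_apply_apply,
    LinearMap.fst_apply, LinearMap.snd_apply, Prod.mk_sub_mk, add_assoc] using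
    liftPairing_add_inner_le ha.le hb.le hc hd

def rotatedForm (ρ : ℂ) (z : ℂ × ℂ × ℂ) : ℝ :=
  liftPairing (ρ * z.1) (ρ * z.2.1) + 2 * (ρ * z.2.2).im ^ 2

theorem convex_triD : Convex ℝ triD :=
  (convex_ball 0 1).prod ((convex_ball 0 1).prod (convex_ball 0 1))

theorem convexOn_rotatedForm {ρ : ℂ} (hρ : ‖ρ‖ = 1) : ConvexOn ℝ triD (rotatedForm ρ) := by
  let rotate₁₂ : (ℂ × ℂ × ℂ) →ₗ[ℝ] ℂ × ℂ :=
    (ρ • LinearMap.fst ℝ ℂ (ℂ × ℂ)).prod (ρ • LinearMap.fst ℝ ℂ ℂ ∘ₗ LinearMap.snd ℝ ℂ (ℂ × ℂ))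
  let imRotate₃ : (ℂ × ℂ × ℂ) →ₗ[ℝ] ℝ :=
    Complex.imLm ∘ₗ (ρ • LinearMap.snd ℝ ℂ ℂ ∘ₗ LinearMap.snd ℝ ℂ (ℂ × ℂ))
  have hL : triD ⊆ rotate₁₂ ⁻¹' (ball 0 1 ×ˢ ball 0 1) := by
    rintro z ⟨h1, h2, -⟩
    simp_all [rotate₁₂, uD]
  have hP := (convexOn_liftPairing.comp_linearMap rotate₁₂).subset hL convex_triD
  have hI := ((Even.convexOn_pow even_two).comp_linearMap imRotate₃).subset (subset_univ _)
    convex_triD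
  exact hP.add (hI.smul zero_le_two)

theorem rotatedForm_eq {ρ : ℂ} (hρ : ‖ρ‖ = 1) (z : ℂ × ℂ × ℂ) :
    rotatedForm ρ z = (ρ ^ 2 * (z.1 * z.2.1 - z.2.2 ^ 2)).re + ‖z.2.2‖ ^ 2
      - discHeight z.1 * discHeight z.2.1 := by
  have hnorm : ∀ x : ℂ, ‖ρ * x‖ = ‖x‖ := fun x => by rw [norm_mul, hρ, one_mul]
  rw [← hnorm z.2.2, Complex.sq_norm, Complex.normSq_apply]
  simp only [rotatedForm, liftPairing, discHeight, hnorm, Complex.mul_re, Complex.mul_im,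
    Complex.sub_re, Complex.sub_im, pow_two]
  ring

theorem Complex.exists_norm_eq_one_sq_mul_eq_norm (v : ℂ) :
    ∃ ρ : ℂ, ‖ρ‖ = 1 ∧ ρ ^ 2 * v = ‖v‖ := by
  refine ⟨Complex.exp (↑(-v.arg / 2) * Complex.I), Complex.norm_exp_ofReal_mul_I _, ?_⟩
  have hv := Complex.norm_mul_exp_arg_mul_I v
  set θ := v.arg
  nth_rw 1 [← hv]
  rw [mul_left_comm, ← Complex.exp_nat_mul, ← Complex.exp_add,
    show ((2 : ℕ) : ℂ) * (↑(-θ / 2) * Complex.I) + θ * Complex.I = 0 by push_cast; ring,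
    Complex.exp_zero, mul_one]

theorem calG_eq_iInter : calG = ⋂ ρ ∈ sphere (0 : ℂ) 1, {z ∈ triD | rotatedForm ρ z < 1} := by
  ext z
  simp only [mem_iInter₂, mem_ofPred_eq, mem_sphere_zero_iff_norm]
  constructor
  · rintro ⟨hz, hlt⟩ ρ hρ
    have hre := Complex.re_le_norm (ρ ^ 2 * (z.1 * z.2.1 - z.2.2 ^ 2))
    rw [norm_mul, norm_pow, hρ, one_pow, one_mul] at hre
    exact ⟨hz, by rw [rotatedForm_eq hρ]; unfold discHeight; linarith⟩
  · intro h
    obtain ⟨ρ, hρ, hρv⟩ := Complex.exists_norm_eq_one_sq_mul_eq_norm (z.1 * z.2.1 - z.2.2 ^ 2)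
    obtain ⟨hz, hlt⟩ := h ρ hρ
    rw [rotatedForm_eq hρ, hρv, Complex.ofReal_re] at hlt
    exact ⟨hz, by unfold discHeight at hlt; linarith⟩

theorem stmt_15 : Convex ℝ calG := by
  rw [calG_eq_iInter]
  exact convex_iInter₂ fun ρ hρ =>
    (convexOn_rotatedForm (mem_sphere_zero_iff_norm.1 hρ)).convex_lt 1
end
end

section
/- Let G ⊆ ℂ³ be open with 0 ∈ G, and let F and ψ be holomorphic functions on G such that F(z) = ψ(z) for every z ∈ G with z₃² = z₁z₂. Then the derivatives of F and ψ at 0 coincide: DF(0) = Dψ(0). -/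
/-!
The difference `F - ψ` vanishes on the quadric cone `z₃² = z₁ z₂` near `0`. The cone is a union
of complex lines through `0`, so the derivative of `F - ψ` at `0` vanishes on every vector of the
cone; and the cone spans `ℂ³` (it contains `e₁`, `e₂` and `e₁ + e₂ + e₃`).
-/

open Filter Topology

def quadricCone (R : Type*) [CommRing R] : Set (R × R × R) :=
  {z | z.2.2 ^ 2 = z.1 * z.2.1}

section QuadricCone

variable {R : Type*} [CommRing R]

theorem smul_mem_quadricCone (c : R) {z : R × R × R} (hz : z ∈ quadricCone R) :
    c • z ∈ quadricCone R := by
  simp only [quadricCone, Set.mem_ofPred_eq, Prod.smul_fst, Prod.smul_snd, smul_eq_mul] at hz ⊢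
  linear_combination c ^ 2 * hz

theorem span_quadricCone : Submodule.span R (quadricCone R) = ⊤ := by
  have mem : ∀ z ∈ quadricCone R, z ∈ Submodule.span R (quadricCone R) :=
    fun z hz => Submodule.subset_span hz
  have e₁ := mem (1, 0, 0) (by simp [quadricCone])
  have e₂ := mem (0, 1, 0) (by simp [quadricCone])
  have e₃ : ((0, 0, 1) : R × R × R) ∈ Submodule.span R (quadricCone R) := by
    have diag := mem (1, 1, 1) (by simp [quadricCone])
    convert Submodule.sub_mem _ (Submodule.sub_mem _ diag e₁) e₂ using 1
    simp
  refine Submodule.eq_top_iff'.2 fun z => ?_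
  have hz : z = z.1 • ((1, 0, 0) : R × R × R) + z.2.1 • (0, 1, 0) + z.2.2 • (0, 0, 1) := by
    simp
  rw [hz]
  exact Submodule.add_mem _ (Submodule.add_mem _ (Submodule.smul_mem _ _ e₁)
    (Submodule.smul_mem _ _ e₂)) (Submodule.smul_mem _ _ e₃)

end QuadricCone

theorem HasFDerivAt.apply_eq_of_eventuallyEq_on_line {𝕜 E F : Type*} [NontriviallyNormedField 𝕜]
    [NormedAddCommGroup E] [NormedSpace 𝕜 E] [NormedAddCommGroup F] [NormedSpace 𝕜 F]
    {f g : E → F} {f' g' : E →L[𝕜] F} {x v : E}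
    (hf : HasFDerivAt f f' x) (hg : HasFDerivAt g g' x)
    (h : ∀ᶠ t in 𝓝 (0 : 𝕜), f (x + t • v) = g (x + t • v)) : f' v = g' v := by
  have line : HasDerivAt (fun t : 𝕜 => x + t • v) v 0 := by
    simpa using ((hasDerivAt_id (0 : 𝕜)).smul_const v).const_add x
  have hf' := (show HasFDerivAt f f' (x + (0 : 𝕜) • v) by simpa using hf).comp_hasDerivAt 0 line
  have hg' := (show HasFDerivAt g g' (x + (0 : 𝕜) • v) by simpa using hg).comp_hasDerivAt 0 line
  exact (hf'.congr_of_eventuallyEq (h.mono fun t ht => ht.symm)).unique hg'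

theorem stmt_17 (G : Set (ℂ × ℂ × ℂ)) (hG : IsOpen G) (h0 : (0 : ℂ × ℂ × ℂ) ∈ G)
    (F ψ : ℂ × ℂ × ℂ → ℂ)
    (hF : DifferentiableOn ℂ F G) (hψ : DifferentiableOn ℂ ψ G)
    (heq : ∀ z ∈ G, z.2.2 ^ 2 = z.1 * z.2.1 → F z = ψ z) :
    fderiv ℂ F 0 = fderiv ℂ ψ 0 := by
  have hG0 : G ∈ 𝓝 (0 : ℂ × ℂ × ℂ) := hG.mem_nhds h0
  refine ContinuousLinearMap.ext_on (s := quadricCone ℂ) (by simp [span_quadricCone])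
    fun v hv => ?_
  have line_mem : ∀ᶠ t in 𝓝 (0 : ℂ), t • v ∈ G :=
    (continuous_id.smul continuous_const).continuousAt.preimage_mem_nhds (by simpa using hG0)
  refine (hF.differentiableAt hG0).hasFDerivAt.apply_eq_of_eventuallyEq_on_line
    (hψ.differentiableAt hG0).hasFDerivAt ?_
  filter_upwards [line_mem] with t ht
  simpa using heq _ ht (smul_mem_quadricCone t hv)
end
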